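/- arXiv:1911.02552 — 7 statements merged into one kernel-verified Lean document; each statement's English description precedes it below -/
import Mathlib

section
/- Let X be a real locally convex Hausdorff topological vector space with topological dual X*, and let (f_i)_{i∈I} be a family of proper functions f_i : X → ℝ∪{+∞} that are nonnegative (f_i(x) ≥ 0 for all x ∈ X). Then the set 𝒜 := ⋃_{J∈𝓕(I)} Σ_{j∈J} epi f_j* is a convex subset of X* × ℝ. -/
open scoped Pointwise Topology
open Set

noncomputable section

variable {X : Type*} [AddCommGroup X] [Module ℝ X] [TopologicalSpace X]
  [IsTopologicalAddGroup X] [ContinuousSMul ℝ X] [LocallyConvexSpace ℝ X] [T2Space X]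
variable {ι : Type*}

/-- Fenchel conjugate of `f : X → ℝ ∪ {+∞}` (modeled as `EReal`-valued),
as a function on the topological dual (with its weak* topology). -/
def econj (f : X → EReal) (p : WeakDual ℝ X) : EReal := ⨆ x : X, (p x : EReal) - f x

/-- Effective domain. -/
def edom (f : X → EReal) : Set X := {x | f x ≠ ⊤}

/-- Domain of the conjugate. -/
def edomStar (f : X → EReal) : Set (WeakDual ℝ X) := {p | econj f p ≠ ⊤}

/-- Epigraph of the conjugate. -/
def epiStar (f : X → EReal) : Set (WeakDual ℝ X × ℝ) := {q | econj f q.1 ≤ (q.2 : EReal)}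

/-- Proper function: never `-∞`, not identically `+∞`. -/
def EProper (f : X → EReal) : Prop := (∀ x, f x ≠ ⊥) ∧ ∃ x, f x ≠ ⊤

/-- Convexity of an extended-real-valued function, via its epigraph. -/
def EConvexFn (f : X → EReal) : Prop := Convex ℝ {q : X × ℝ | f q.1 ≤ (q.2 : EReal)}

/-- Robust sum of a family of functions. -/
def rsum (f : ι → X → EReal) (x : X) : EReal :=
  ⨆ (J : Finset ι) (_ : J.Nonempty), ∑ j ∈ J, f j x

/-- A set is weakly compact if it is compact in the weak topology `σ(X, X*)`. -/
def WCompact (K : Set X) : Prop := IsCompact (toWeakSpace ℝ X '' K)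

/-- A subset of a topological space is locally compact if each of its points has
a compact neighborhood (within the set). -/
def IsLocCompactSet {Y : Type*} [TopologicalSpace Y] (S : Set Y) : Prop :=
  ∀ y ∈ S, ∃ K, K ⊆ S ∧ IsCompact K ∧ K ∈ nhdsWithin y S

/-- `g` is weakly inf-locally compact if each sublevel set `[g ≤ r]` is
locally compact in the weak topology `σ(X, X*)`. -/
def WInfLocCompact (g : X → EReal) : Prop :=
  ∀ r : ℝ, IsLocCompactSet (toWeakSpace ℝ X '' {x | g x ≤ (r : EReal)})

/-- The cone generated by `B ∪ {0}`. -/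
def coneHull {Z : Type*} [AddCommGroup Z] [Module ℝ Z] (B : Set Z) : Set Z :=
  {0} ∪ {z | ∃ c : ℝ, 0 < c ∧ ∃ b ∈ B, z = c • b}

/-- Optimal value of the primal problem `(RP_p)`. -/
def primalVal (f : X → EReal) (p : WeakDual ℝ X) : EReal := ⨅ x : X, f x - (p x : EReal)

/-- Optimal solution set of the primal problem `(RP_p)`. -/
def primalSol (f : X → EReal) (p : WeakDual ℝ X) : Set X :=
  {x | f x - (p x : EReal) = primalVal f p}

/-- Feasibility for the dual problem `(RD_p)`. -/
def dualFeas (p : WeakDual ℝ X) (J : Finset ι) (xs : ι → WeakDual ℝ X) : Prop :=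
  J.Nonempty ∧ ∑ j ∈ J, xs j = p

/-- Dual objective. -/
def dualObj (f : ι → X → EReal) (J : Finset ι) (xs : ι → WeakDual ℝ X) : EReal :=
  -∑ j ∈ J, econj (f j) (xs j)

/-- Optimal value of the dual problem `(RD_p)`. -/
def dualVal (f : ι → X → EReal) (p : WeakDual ℝ X) : EReal :=
  ⨆ (J : Finset ι) (xs : ι → WeakDual ℝ X) (_ : dualFeas p J xs), dualObj f J xs

/-- Optimal solutions of the dual problem `(RD_p)`. -/
def dualSol (f : ι → X → EReal) (p : WeakDual ℝ X) (J : Finset ι)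
    (xs : ι → WeakDual ℝ X) : Prop :=
  dualFeas p J xs ∧ dualObj f J xs = dualVal f p

/-- Subdifferential of `f` at `a`. -/
def esubdiff (f : X → EReal) (a : X) : Set (WeakDual ℝ X) :=
  {p | f a ≠ ⊥ ∧ f a ≠ ⊤ ∧ ∀ x, f a + ((p x - p a : ℝ) : EReal) ≤ f x}

/-- `S_f(x)`: nonempty finite subsets realizing the robust sum at `x ∈ dom f`. -/
def Ssets (f : ι → X → EReal) (x : X) : Set (Finset ι) :=
  {J | J.Nonempty ∧ rsum f x ≠ ⊤ ∧ ∑ j ∈ J, f j x = rsum f x}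

/-- `T_f(J)`, the inverse of `S_f`. -/
def Tset (f : ι → X → EReal) (J : Finset ι) : Set X := {x | J ∈ Ssets f x}

/-- `M_g(p) = argmin (g - ⟨p, ·⟩)` when `g*(p)` is finite, `∅` otherwise. -/
def Mmap (g : X → EReal) (p : WeakDual ℝ X) : Set X :=
  {x | econj g p ≠ ⊥ ∧ econj g p ≠ ⊤ ∧ ∀ y, g x - (p x : EReal) ≤ g y - (p y : EReal)}

/-- Support function of a subset of the dual. -/
def suppFn (A : Set (WeakDual ℝ X)) (x : X) : EReal := ⨆ a ∈ A, ((a : WeakDual ℝ X) x : EReal)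

/-- The function `φ` of (2.0). -/
def phiFun (f : ι → X → EReal) (p : WeakDual ℝ X) (q : WeakDual ℝ X) : EReal :=
  ⨅ (J : Finset ι) (xs : ι → WeakDual ℝ X) (_ : dualFeas (q + p) J xs),
    ∑ j ∈ J, econj (f j) (xs j)

/-- Subdifferential of a function on the dual, with subgradients in `X`. -/
def esubdiffStar (φ : WeakDual ℝ X → EReal) (q : WeakDual ℝ X) : Set X :=
  {x | φ q ≠ ⊥ ∧ φ q ≠ ⊤ ∧ ∀ p : WeakDual ℝ X, φ q + ((p x - q x : ℝ) : EReal) ≤ φ p}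


lemma epiStar_convex (g : X → EReal) (hbot : ∀ x, g x ≠ ⊥) : Convex ℝ (epiStar g) := by
  rintro ⟨p, r⟩ hp ⟨p', r'⟩ hp' a b ha hb hab
  simp only [epiStar, mem_setOf_eq, econj] at hp hp' ⊢
  refine iSup_le fun x => ?_
  have hx := (le_iSup _ x).trans hp
  have hx' := (le_iSup (fun x => (p' x : EReal) - g x) x).trans hp'
  rcases eq_or_ne (g x) ⊤ with h | h
  · simp [h]
  · lift g x to ℝ using ⟨h, hbot x⟩ with t ht
    have h1 : p x - t ≤ r := by exact_mod_cast (by rw [← EReal.coe_sub] at hx; exact_mod_cast hx)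
    have h2 : p' x - t ≤ r' := by
      exact_mod_cast (by rw [← EReal.coe_sub] at hx'; exact_mod_cast hx')
    have heval : ((a • (p, r) + b • (p', r')).1 : WeakDual ℝ X) x = a * p x + b * p' x := by
      rfl
    have h2eval : (a • (p, r) + b • (p', r')).2 = a * r + b * r' := by
      rfl
    rw [heval, h2eval, ← EReal.coe_sub, EReal.coe_le_coe_iff]
    have hT : a * t + b * t = t := by rw [← add_mul, hab, one_mul]
    nlinarith [mul_le_mul_of_nonneg_left h1 ha, mul_le_mul_of_nonneg_left h2 hb]

lemma zero_mem_epiStar (g : X → EReal) (hnn : ∀ x, 0 ≤ g x) :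
    (0 : WeakDual ℝ X × ℝ) ∈ epiStar g := by
  simp only [epiStar, mem_setOf_eq, econj]
  refine iSup_le fun x => ?_
  have : ((0 : WeakDual ℝ X) x : EReal) = 0 := by
    norm_cast
  rw [Prod.fst_zero, this]
  calc (0 : EReal) - g x ≤ 0 - 0 := by
        exact EReal.sub_le_sub le_rfl (hnn x)
    _ = ((0 : WeakDual ℝ X × ℝ).2 : EReal) := by simp

lemma sum_epiStar_mono (A : ι → Set (WeakDual ℝ X × ℝ)) {J K : Finset ι} (hJK : J ⊆ K)
    (h0 : ∀ j, (0 : WeakDual ℝ X × ℝ) ∈ A j) : (∑ j ∈ J, A j) ⊆ ∑ j ∈ K, A j := by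
  classical
  intro x hx
  rw [← Finset.sum_sdiff hJK]
  have h0' : (0 : WeakDual ℝ X × ℝ) ∈ ∑ j ∈ K \ J, A j := by
    have := Set.finset_sum_mem_finset_sum (K \ J) A (fun _ => 0) (fun i _ => h0 i)
    simpa using this
  have := Set.add_mem_add h0' hx
  simpa using this

/-- **Example 1.1.** If `(f i)_{i ∈ ι}` is a family of proper nonnegative functions on a real
locally convex Hausdorff space `X`, then `𝒜 = ⋃_{J ∈ 𝓕(ι)} Σ_{j ∈ J} epi f_j*` is a convex
subset of `X* × ℝ`. -/
theorem epi_conj_union_convex [Nonempty ι] (f : ι → X → EReal)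
    (hproper : ∀ i, EProper (f i)) (hnonneg : ∀ i x, 0 ≤ f i x) :
    Convex ℝ (⋃ J ∈ {J : Finset ι | J.Nonempty}, ∑ j ∈ J, epiStar (f j)) := by
  classical
  have hbot : ∀ i x, f i x ≠ ⊥ := fun i x h => by simpa [h] using hnonneg i x
  have h0 : ∀ j, (0 : WeakDual ℝ X × ℝ) ∈ epiStar (f j) :=
    fun j => zero_mem_epiStar (f j) (hnonneg j)
  intro u hu v hv a b ha hb hab
  simp only [mem_iUnion, mem_setOf_eq] at hu hv ⊢
  obtain ⟨J, hJ, hu⟩ := hu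
  obtain ⟨K, hK, hv⟩ := hv
  refine ⟨J ∪ K, hJ.mono Finset.subset_union_left, ?_⟩
  have hu' : u ∈ ∑ j ∈ J ∪ K, epiStar (f j) :=
    sum_epiStar_mono _ Finset.subset_union_left h0 hu
  have hv' : v ∈ ∑ j ∈ J ∪ K, epiStar (f j) :=
    sum_epiStar_mono _ Finset.subset_union_right h0 hv
  exact convex_sum _ (fun j _ => epiStar_convex (f j) (hbot j)) hu' hv' ha hb hab
end
end

section
/- Let X be a real locally convex Hausdorff topological vector space with topological dual X*, and let (f_i)_{i∈I} be a family of proper functions f_i : X → ℝ∪{+∞}, each of which is bounded below. Then the set A := ⋃_{J∈𝓕(I)} Σ_{j∈J} dom f_j* is a convex subset of X*. -/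
open scoped Pointwise Topology
open Set

noncomputable section

variable {X : Type*} [AddCommGroup X] [Module ℝ X] [TopologicalSpace X]
  [IsTopologicalAddGroup X] [ContinuousSMul ℝ X] [LocallyConvexSpace ℝ X] [T2Space X]
variable {ι : Type*}

section AuxLemmas

lemma ereal_le_coe_of_ne_top {a : EReal} (h : a ≠ ⊤) : ∃ M : ℝ, a ≤ (M : EReal) := by
  induction a with
  | bot => exact ⟨0, bot_le⟩
  | coe r => exact ⟨r, le_refl _⟩
  | top => exact absurd rfl h

lemma zero_mem_edomStar (f : X → EReal) (m : ℝ) (hm : ∀ x, (m : EReal) ≤ f x) :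
    (0 : WeakDual ℝ X) ∈ edomStar f := by
  have hle : econj f 0 ≤ ((-m : ℝ) : EReal) := by
    refine iSup_le fun x => ?_
    rw [show ((0 : WeakDual ℝ X) x) = 0 from rfl, EReal.coe_zero, zero_sub,
      show ((-m : ℝ) : EReal) = -(m : EReal) by simp]
    exact EReal.neg_le_neg_iff.2 (hm x)
  simp only [edomStar, Set.mem_setOf_eq]
  intro htop
  rw [htop] at hle
  exact (EReal.coe_lt_top _).not_ge hle

lemma edomStar_convex (f : X → EReal) (hf : EProper f) : Convex ℝ (edomStar f) := by
  intro p hp q hq t s ht hs hts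
  obtain ⟨Mp, hMp⟩ := ereal_le_coe_of_ne_top hp
  obtain ⟨Mq, hMq⟩ := ereal_le_coe_of_ne_top hq
  have hbp : ∀ x, ((p x : ℝ) : EReal) - f x ≤ (Mp : EReal) :=
    fun x => le_trans (le_iSup (fun x => ((p x : ℝ) : EReal) - f x) x) hMp
  have hbq : ∀ x, ((q x : ℝ) : EReal) - f x ≤ (Mq : EReal) :=
    fun x => le_trans (le_iSup (fun x => ((q x : ℝ) : EReal) - f x) x) hMq
  have hle : econj f (t • p + s • q) ≤ ((t * Mp + s * Mq : ℝ) : EReal) := by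
    refine iSup_le fun x => ?_
    have hval : ((t • p + s • q) x : ℝ) = t * p x + s * q x := by
      rfl
    rw [hval]
    by_cases htop : f x = ⊤
    · rw [htop]
      rw [show ((t * p x + s * q x : ℝ) : EReal) - ⊤ = ⊥ by simp [sub_eq_add_neg]]
      exact bot_le
    · have hc : (((f x).toReal : ℝ) : EReal) = f x := EReal.coe_toReal htop (hf.1 x)
      set c := (f x).toReal
      rw [← hc]
      have h1 : (p x : ℝ) - c ≤ Mp := by
        have := hbp x; rw [← hc] at this
        exact_mod_cast this
      have h2 : (q x : ℝ) - c ≤ Mq := by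
        have := hbq x; rw [← hc] at this
        exact_mod_cast this
      have : (t * p x + s * q x) - c ≤ t * Mp + s * Mq := by
        have e1 := mul_le_mul_of_nonneg_left h1 ht
        have e2 := mul_le_mul_of_nonneg_left h2 hs
        rw [mul_sub] at e1 e2
        have hcsum : t * c + s * c = c := by rw [← add_mul, hts, one_mul]
        linarith
      exact_mod_cast this
  simp only [edomStar, Set.mem_setOf_eq]
  intro htop
  rw [htop] at hle
  exact (EReal.coe_lt_top _).not_ge hle

end AuxLemmas

/-- **Example 1.2.** If `(f i)_{i ∈ ι}` is a family of proper functions on a real locally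
convex Hausdorff space `X`, each bounded below, then `⋃_{J ∈ 𝓕(ι)} Σ_{j ∈ J} dom f_j*` is a
convex subset of `X*`. -/
theorem dom_conj_union_convex [Nonempty ι] (f : ι → X → EReal)
    (hproper : ∀ i, EProper (f i)) (hbdd : ∀ i, ∃ m : ℝ, ∀ x, (m : EReal) ≤ f i x) :
    Convex ℝ (⋃ J ∈ {J : Finset ι | J.Nonempty}, ∑ j ∈ J, edomStar (f j)) := by
  classical
  intro p hp q hq t s ht hs hts
  simp only [Set.mem_iUnion, Set.mem_setOf_eq] at hp hq ⊢
  obtain ⟨J₁, hJ₁, hp⟩ := hp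
  obtain ⟨J₂, hJ₂, hq⟩ := hq
  rw [Set.mem_finset_sum] at hp hq
  obtain ⟨g₁, hg₁, hg₁sum⟩ := hp
  obtain ⟨g₂, hg₂, hg₂sum⟩ := hq
  refine ⟨J₁ ∪ J₂, hJ₁.mono Finset.subset_union_left, ?_⟩
  rw [Set.mem_finset_sum]
  set g₁' : ι → WeakDual ℝ X := fun i => if i ∈ J₁ then g₁ i else 0 with hg₁'def
  set g₂' : ι → WeakDual ℝ X := fun i => if i ∈ J₂ then g₂ i else 0 with hg₂'def
  refine ⟨fun i => t • g₁' i + s • g₂' i, fun {i} hi => ?_, ?_⟩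
  · have h1 : g₁' i ∈ edomStar (f i) := by
      by_cases h : i ∈ J₁
      · simpa [hg₁'def, h] using hg₁ h
      · obtain ⟨m, hm⟩ := hbdd i
        simpa [hg₁'def, h] using zero_mem_edomStar (f i) m hm
    have h2 : g₂' i ∈ edomStar (f i) := by
      by_cases h : i ∈ J₂
      · simpa [hg₂'def, h] using hg₂ h
      · obtain ⟨m, hm⟩ := hbdd i
        simpa [hg₂'def, h] using zero_mem_edomStar (f i) m hm
    exact edomStar_convex (f i) (hproper i) h1 h2 ht hs hts
  · rw [Finset.sum_add_distrib, ← Finset.smul_sum, ← Finset.smul_sum]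
    have e1 : ∑ i ∈ J₁ ∪ J₂, g₁' i = p := by
      rw [hg₁'def, Finset.sum_ite_mem, Finset.union_inter_cancel_left, hg₁sum]
    have e2 : ∑ i ∈ J₁ ∪ J₂, g₂' i = q := by
      rw [hg₂'def, Finset.sum_ite_mem, Finset.union_inter_cancel_right, hg₂sum]
    rw [e1, e2]
end
end

section
/- Let X be a real locally convex Hausdorff topological vector space with topological dual X*, let (f_i)_{i∈I} be a family of proper lower semicontinuous convex functions f_i : X → ℝ∪{+∞}, and let x̄* ∈ X*. Assume that the robust sum f := Σ^R_{i∈I} f_i is proper and weakly inf-locally compact, and that the w*-closed conic hull of the convex hull of the set (⋃_{J∈𝓕(I)} Σ_{j∈J} dom f_j*) − x̄* is a linear subspace of X*. Then the set of optimal solutions of the problem (RP_{x̄*}): inf_{x∈X} (f(x) − ⟨x̄*,x⟩) is nonempty; more precisely, it is the sum of a nonempty convex weakly compact subset of X and a finite-dimensional linear subspace of X. -/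
open scoped Pointwise Topology
open Set

noncomputable section

variable {X : Type*} [AddCommGroup X] [Module ℝ X] [TopologicalSpace X]
  [IsTopologicalAddGroup X] [ContinuousSMul ℝ X] [LocallyConvexSpace ℝ X] [T2Space X]
variable {ι : Type*}

/-!
Conjugate duality writes `f - x̄*` as the supremum of the continuous affine functions
`x ↦ ⟨q - x̄*, x⟩ - γ` with `q ∈ ⋃_J Σ_{j ∈ J} dom f_j*` and `γ ≥ f*(q)`. Hence, in the weak
topology, its sublevel sets are closed and convex and invariant under the preannihilator `R` of
the slopes `q - x̄*`; and since the w*-closed convex cone generated by the slopes is a subspace,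
every recession direction of a sublevel set lies in `R`. A locally compact sublevel set contains a
translate of the closed subspace `R`, so `R` is finite-dimensional by Riesz's theorem. On a closed
complement of `R` the sublevel sets are closed, convex, locally compact and have no recession
directions, hence they are compact. The minimum is attained on such a compact slice, and the
solution set is the slice at the optimal level plus `R`.
-/

open Filter

namespace EReal

lemma coe_finset_sum {ι : Type*} (J : Finset ι) (b : ι → ℝ) :
    ((∑ j ∈ J, b j : ℝ) : EReal) = ∑ j ∈ J, (b j : EReal) :=
  map_sum (⟨⟨Real.toEReal, coe_zero⟩, coe_add⟩ : ℝ →+ EReal) b J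

lemma coe_sub_le_coe_iff {a b : ℝ} {y : EReal} :
    (a : EReal) - y ≤ b ↔ ((a - b : ℝ) : EReal) ≤ y := by
  induction y with
  | bot => simp [-coe_sub]
  | coe y => norm_cast; constructor <;> intro <;> linarith
  | top => simp

lemma sub_coe_ne_bot {a : EReal} (ha : a ≠ ⊥) (c : ℝ) : a - c ≠ ⊥ := by
  induction a <;> simp_all [← coe_sub]

lemma sub_coe_ne_top {a : EReal} (ha : a ≠ ⊤) (c : ℝ) : a - c ≠ ⊤ := by
  induction a <;> simp_all [← coe_sub]

lemma exists_lt_sum_of_coe_lt_sum {ι : Type*} {J : Finset ι} {a : ι → EReal} {β : ℝ}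
    (h : (β : EReal) < ∑ j ∈ J, a j) :
    ∃ b : ι → ℝ, (∀ j ∈ J, (b j : EReal) < a j) ∧ β < ∑ j ∈ J, b j := by
  classical
  induction J using Finset.cons_induction generalizing β with
  | empty => exact ⟨0, by simp, by simpa using h⟩
  | cons i J hi ih =>
    rw [Finset.sum_cons] at h
    obtain ⟨u, hu, hua⟩ := exists_between_coe_real (sub_lt_of_lt_add h)
    have hS : ((β - u : ℝ) : EReal) < ∑ j ∈ J, a j := by
      rw [coe_sub, sub_lt_iff (.inl (coe_ne_bot u)) (.inl (coe_ne_top u)), add_comm]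
      exact (sub_lt_iff (.inr (coe_ne_bot β)) (.inr (coe_ne_top β))).1 hu
    obtain ⟨b, hb, hβb⟩ := ih hS
    have hJ : ∀ j ∈ J, Function.update b i u j = b j := fun j hj =>
      Function.update_of_ne (by rintro rfl; exact hi hj) _ _
    refine ⟨Function.update b i u, ?_, ?_⟩
    · simp only [Finset.mem_cons, forall_eq_or_imp, Function.update_self]
      exact ⟨hua, fun j hj => hJ j hj ▸ hb j hj⟩
    · rw [Finset.sum_cons, Function.update_self, Finset.sum_congr rfl hJ]
      linarith

end EReal

section Conjugate

variable {E : Type*} [AddCommGroup E] [Module ℝ E] [TopologicalSpace E]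

instance : IsZeroApply (WeakDual ℝ E) E ℝ := ⟨fun _ => rfl⟩
instance : IsAddApply (WeakDual ℝ E) E ℝ := ⟨fun _ _ _ => rfl⟩
instance : IsSubApply (WeakDual ℝ E) E ℝ := ⟨fun _ _ _ => rfl⟩
instance : IsSMulApply ℝ (WeakDual ℝ E) E ℝ := ⟨fun _ _ _ => rfl⟩

lemma econj_le_coe_iff {g : E → EReal} {q : WeakDual ℝ E} {β : ℝ} :
    econj g q ≤ β ↔ ∀ x, ((q x - β : ℝ) : EReal) ≤ g x := by
  simp only [econj, iSup_le_iff, EReal.coe_sub_le_coe_iff]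

lemma econj_le_coe_of_forall {g : E → EReal} {q : WeakDual ℝ E} {β : ℝ}
    (h : ∀ x (t : ℝ), g x ≤ t → q x - β ≤ t) : econj g q ≤ β :=
  econj_le_coe_iff.2 fun x => EReal.le_of_forall_lt_iff_le.1 fun t ht => by
    exact_mod_cast h x t ht.le

lemma econj_rsum_sum_le (f : ι → E → EReal) {J : Finset ι} (hJ : J.Nonempty)
    {qs : ι → WeakDual ℝ E} {βs : ι → ℝ} (h : ∀ j ∈ J, econj (f j) (qs j) ≤ βs j) :
    econj (rsum f) (∑ j ∈ J, qs j) ≤ ∑ j ∈ J, βs j := by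
  refine econj_le_coe_iff.2 fun x => ?_
  calc (((∑ j ∈ J, qs j) x - ∑ j ∈ J, βs j : ℝ) : EReal)
      = ∑ j ∈ J, ((qs j x - βs j : ℝ) : EReal) := by
        rw [sum_apply, ← Finset.sum_sub_distrib, EReal.coe_finset_sum]
    _ ≤ ∑ j ∈ J, f j x := Finset.sum_le_sum fun j hj => econj_le_coe_iff.1 (h j hj) x
    _ ≤ rsum f x := le_iSup₂_of_le J hJ le_rfl

lemma econj_le_of_separation {g : E → EReal} {q : WeakDual ℝ E} {c u : ℝ} (hc : c < 0)
    (hsep : ∀ z (t : ℝ), g z ≤ t → q z + c * t < u) : econj g ((-c)⁻¹ • q) ≤ (-c)⁻¹ * u :=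
  econj_le_coe_of_forall fun z t hzt => by
    rw [smul_apply, smul_eq_mul, ← mul_sub, inv_mul_le_iff₀ (neg_pos.2 hc)]
    linarith [hsep z t hzt]

variable [IsTopologicalAddGroup E] [ContinuousSMul ℝ E] [LocallyConvexSpace ℝ E]

lemma exists_separation_of_lt {g : E → EReal} (hl : LowerSemicontinuous g) (hc : EConvexFn g)
    {x : E} {α : ℝ} (h : (α : EReal) < g x) :
    ∃ (q : WeakDual ℝ E) (c u : ℝ),
      (∀ z (t : ℝ), g z ≤ t → q z + c * t < u) ∧ u < q x + c * α := by
  have hcl : IsClosed {a : E × ℝ | g a.1 ≤ a.2} :=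
    hl.isClosed_epigraph.preimage (continuous_fst.prodMk (continuous_coe_real_ereal.comp
      continuous_snd))
  obtain ⟨φ, u, hsep, hx⟩ :=
    geometric_hahn_banach_closed_point hc hcl (show (x, α) ∉ _ from h.not_ge)
  have hφ : ∀ z t, φ (z, t) = φ (z, 0) + t * φ (0, 1) := fun z t => by
    rw [← smul_eq_mul, ← map_smul, ← map_add]
    simp
  refine ⟨φ.comp (.inl ℝ E ℝ), φ (0, 1), u, fun z t hzt => ?_, ?_⟩
  · show φ (z, 0) + φ (0, 1) * t < u
    simpa [hφ z t, mul_comm] using hsep (z, t) hzt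
  · show u < φ (x, 0) + φ (0, 1) * α
    simpa [hφ x α, mul_comm] using hx

lemma EProper.exists_econj_le {g : E → EReal} (hp : EProper g) (hl : LowerSemicontinuous g)
    (hc : EConvexFn g) : ∃ (q : WeakDual ℝ E) (β : ℝ), econj g q ≤ β := by
  obtain ⟨x, hx⟩ := hp.2
  have hxt : g x = (g x).toReal := (EReal.coe_toReal hx (hp.1 x)).symm
  obtain ⟨q, c, u, hsep, hu⟩ := exists_separation_of_lt hl hc (x := x) (α := (g x).toReal - 1)
    (by rw [hxt]; exact_mod_cast sub_one_lt _)
  have hc0 : c < 0 := by linarith [hsep x _ hxt.le]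
  exact ⟨_, _, econj_le_of_separation hc0 hsep⟩

/-- Every proper lsc convex function is the supremum of its continuous affine minorants. -/
lemma EProper.exists_econj_le_of_lt {g : E → EReal} (hp : EProper g)
    (hl : LowerSemicontinuous g) (hc : EConvexFn g) {x : E} {α : ℝ} (h : (α : EReal) < g x) :
    ∃ (q : WeakDual ℝ E) (β : ℝ), econj g q ≤ β ∧ α < q x - β := by
  obtain ⟨q₀, c, u, hsep, hu⟩ := exists_separation_of_lt hl hc h
  obtain ⟨x₀, hx₀⟩ := hp.2
  have hx₀t : g x₀ ≤ (g x₀).toReal := EReal.le_coe_toReal hx₀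
  have hc0 : c ≤ 0 := by
    by_contra! hc0
    set t := max (g x₀).toReal ((u - q₀ x₀) / c)
    have h1 := hsep x₀ t (hx₀t.trans (by exact_mod_cast le_max_left _ _))
    have h2 := mul_le_mul_of_nonneg_left (le_max_right _ _ : (u - q₀ x₀) / c ≤ t) hc0.le
    rw [mul_div_cancel₀ _ hc0.ne'] at h2
    linarith
  rcases hc0.lt_or_eq with hneg | rfl
  · refine ⟨_, _, econj_le_of_separation hneg hsep, ?_⟩
    rw [smul_apply, smul_eq_mul, ← mul_sub, lt_inv_mul_iff₀ (neg_pos.2 hneg)]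
    linarith
  -- a vertical separating hyperplane: tilt some affine minorant along it
  obtain ⟨q₁, β₁, hq₁⟩ := hp.exists_econj_le hl hc
  have hu' : u < q₀ x := by simpa using hu
  set s := (|α - (q₁ x - β₁)| + 1) / (q₀ x - u)
  have hs : s * (q₀ x - u) = |α - (q₁ x - β₁)| + 1 := div_mul_cancel₀ _ (by linarith)
  have hs0 : 0 ≤ s := div_nonneg (by positivity) (by linarith)
  refine ⟨q₁ + s • q₀, β₁ + s * u, econj_le_coe_of_forall fun z t hzt => ?_, ?_⟩
  · have h1 : ((q₁ z - β₁ : ℝ) : EReal) ≤ t := (econj_le_coe_iff.1 hq₁ z).trans hzt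
    have h2 : s * q₀ z ≤ s * u := mul_le_mul_of_nonneg_left (by simpa using (hsep z t hzt).le) hs0
    norm_cast at h1
    simp only [add_apply, smul_apply, smul_eq_mul]
    linarith
  · simp only [add_apply, smul_apply, smul_eq_mul]
    linarith [le_abs_self (α - (q₁ x - β₁))]

end Conjugate

section RobustSum

variable {E : Type*} [AddCommGroup E] [Module ℝ E] [TopologicalSpace E]

def sumDomStar (f : ι → E → EReal) : Set (WeakDual ℝ E) :=
  ⋃ J ∈ {J : Finset ι | J.Nonempty}, ∑ j ∈ J, edomStar (f j)

variable [IsTopologicalAddGroup E] [ContinuousSMul ℝ E] [LocallyConvexSpace ℝ E]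

theorem rsum_le_coe_iff {f : ι → E → EReal} (hproper : ∀ i, EProper (f i))
    (hlsc : ∀ i, LowerSemicontinuous (f i)) (hconv : ∀ i, EConvexFn (f i)) (x : E) (r : ℝ) :
    rsum f x ≤ r ↔ ∀ q ∈ sumDomStar f, ∀ γ : ℝ, econj (rsum f) q ≤ γ → q x - γ ≤ r := by
  refine ⟨fun h q _ γ hγ => by exact_mod_cast (econj_le_coe_iff.1 hγ x).trans h, fun h => ?_⟩
  refine iSup₂_le fun J hJ => ?_
  by_contra! hlt
  obtain ⟨b, hb, hrb⟩ := EReal.exists_lt_sum_of_coe_lt_sum hlt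
  choose! qs βs hqs hβs using fun j hj =>
    (hproper j).exists_econj_le_of_lt (hlsc j) (hconv j) (hb j hj)
  have hD : ∑ j ∈ J, qs j ∈ sumDomStar f := mem_iUnion₂.2 ⟨J, hJ, (Set.mem_finsetSum _ _ _).2
    ⟨qs, fun hj => ne_top_of_le_ne_top (EReal.coe_ne_top _) (hqs _ hj), rfl⟩⟩
  have h1 := h _ hD _ (econj_rsum_sum_le f hJ hqs)
  have h2 := Finset.sum_lt_sum_of_nonempty hJ hβs
  rw [sum_apply] at h1
  rw [Finset.sum_sub_distrib] at h2
  linarith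

end RobustSum

lemma closure_coneHull_convexHull_subset {Z : Type*} [AddCommGroup Z] [Module ℝ Z]
    [TopologicalSpace Z] {B C : Set Z} (hBC : B ⊆ C) (hC : Convex ℝ C) (hCcl : IsClosed C)
    (h0 : (0 : Z) ∈ C) (hsmul : ∀ c : ℝ, 0 < c → ∀ z ∈ C, c • z ∈ C) :
    closure (coneHull (convexHull ℝ B)) ⊆ C := by
  refine hCcl.closure_subset_iff.2 ?_
  rintro _ (rfl | ⟨c, hc, b, hb, rfl⟩)
  · exact h0
  · exact hsmul c hc b (convexHull_min hBC hC hb)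

lemma subset_closure_coneHull_convexHull {Z : Type*} [AddCommGroup Z] [Module ℝ Z]
    [TopologicalSpace Z] (B : Set Z) : B ⊆ closure (coneHull (convexHull ℝ B)) := fun b hb =>
  subset_closure (Or.inr ⟨1, one_pos, b, subset_convexHull ℝ B hb, (one_smul ℝ b).symm⟩)

section SupOfAffine

variable {E : Type*} [AddCommGroup E] [Module ℝ E] [TopologicalSpace E]

lemma WeakDual.continuous_apply_toWeakSpace_symm (w : WeakDual ℝ E) :
    Continuous fun z : WeakSpace ℝ E => w ((toWeakSpace ℝ E).symm z) :=
  WeakBilin.eval_continuous (topDualPairing ℝ E).flip w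

def preannihilator (D : Set (WeakDual ℝ E)) : Submodule ℝ (WeakSpace ℝ E) where
  carrier := {z | ∀ w ∈ D, w ((toWeakSpace ℝ E).symm z) = 0}
  add_mem' ha hb w hw := by simp [ha w hw, hb w hw]
  zero_mem' _ _ := by simp
  smul_mem' c z hz w hw := by simp [hz w hw]

/-- `g` is the supremum of the continuous affine functions `x ↦ w x - γ`, `(w, γ) ∈ A`. -/
def IsSupOfAffine (g : E → EReal) (A : Set (WeakDual ℝ E × ℝ)) : Prop :=
  ∀ (r : ℝ) x, g x ≤ r ↔ ∀ a ∈ A, a.1 x - a.2 ≤ r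

variable {g : E → EReal} {A : Set (WeakDual ℝ E × ℝ)}

lemma IsSupOfAffine.lowerSemicontinuous (h : IsSupOfAffine g A) :
    LowerSemicontinuous fun z : WeakSpace ℝ E => g ((toWeakSpace ℝ E).symm z) := by
  intro z y hy
  obtain ⟨r, hyr, hrz⟩ := EReal.exists_between_coe_real hy
  obtain ⟨a, ha, har⟩ : ∃ a ∈ A, r < a.1 ((toWeakSpace ℝ E).symm z) - a.2 := by
    by_contra! hle
    exact hrz.not_ge ((h r _).2 hle)
  have hcont := a.1.continuous_apply_toWeakSpace_symm.sub (continuous_const (y := a.2))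
  filter_upwards [(hcont.tendsto z).eventually (lt_mem_nhds har)] with z' hz'
  exact hyr.trans (lt_of_not_ge fun hle => hz'.not_ge ((h r _).1 hle a ha))

lemma IsSupOfAffine.convex_sublevel (h : IsSupOfAffine g A) (r : ℝ) :
    Convex ℝ {z : WeakSpace ℝ E | g ((toWeakSpace ℝ E).symm z) ≤ r} := by
  intro x hx y hy s t hs ht hst
  simp only [mem_ofPred_eq, h r] at hx hy ⊢
  intro a ha
  obtain rfl : t = 1 - s := by linarith
  simp only [map_add, map_smul, smul_eq_mul]
  nlinarith [mul_le_mul_of_nonneg_left (hx a ha) hs, mul_le_mul_of_nonneg_left (hy a ha) ht]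

lemma IsSupOfAffine.le_of_mem_preannihilator (h : IsSupOfAffine g A) (z : WeakSpace ℝ E) {d}
    (hd : d ∈ preannihilator (Prod.fst '' A)) :
    g ((toWeakSpace ℝ E).symm (z + d)) ≤ g ((toWeakSpace ℝ E).symm z) :=
  EReal.le_of_forall_lt_iff_le.1 fun r hr => (h r _).2 fun a ha => by
    rw [map_add, map_add, hd a.1 (mem_image_of_mem _ ha), add_zero]
    exact (h r _).1 hr.le a ha

lemma IsSupOfAffine.mem_preannihilator (h : IsSupOfAffine g A) {V : Submodule ℝ (WeakDual ℝ E)}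
    (hV : closure (coneHull (convexHull ℝ (Prod.fst '' A))) = V) {r : ℝ} {z d : WeakSpace ℝ E}
    (hrec : ∀ s : ℝ, 0 < s → g ((toWeakSpace ℝ E).symm (z + s • d)) ≤ r) :
    d ∈ preannihilator (Prod.fst '' A) := by
  set x := (toWeakSpace ℝ E).symm d
  have hslope : ∀ w ∈ Prod.fst '' A, w x ≤ 0 := by
    rintro _ ⟨a, ha, rfl⟩
    by_contra! hpos
    set c := a.1 ((toWeakSpace ℝ E).symm z) - a.2
    have hs : 0 < (|r - c| + 1) / a.1 x := by positivity
    have := (h r _).1 (hrec _ hs) a ha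
    rw [map_add, map_add, map_smul, map_smul, smul_eq_mul, div_mul_cancel₀ _ hpos.ne'] at this
    linarith [le_abs_self (r - c)]
  have hVx : (V : Set (WeakDual ℝ E)) ⊆ {w | w x ≤ 0} := hV ▸
    closure_coneHull_convexHull_subset hslope
      (convex_halfSpace_le ⟨fun _ _ => rfl, fun _ _ => rfl⟩ 0)
      (isClosed_le (WeakDual.eval_continuous x) continuous_const) (by simp)
      fun c hc w hw => by simpa using mul_nonpos_of_nonneg_of_nonpos hc.le hw
  -- the closed convex cone generated by the slopes is a subspace, so they all vanish at `x`
  intro w hw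
  have hwV : w ∈ V := by
    rw [← SetLike.mem_coe, ← hV]
    exact subset_closure_coneHull_convexHull _ hw
  have h1 : w x ≤ 0 := hVx hwV
  have h2 : -w x ≤ 0 := hVx (V.neg_mem hwV)
  linarith

end SupOfAffine

lemma Convex.add_smul_mem_of_le {Y : Type*} [AddCommGroup Y] [Module ℝ Y] {C : Set Y}
    (hC : Convex ℝ C) {x v : Y} (hx : x ∈ C) {a b : ℝ} (ha : 0 ≤ a) (hab : a ≤ b) (hb : x + b • v ∈ C) : x + a • v ∈ C := by
  rcases ha.eq_or_lt with rfl | ha'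
  · simpa using hx
  have hb0 : 0 < b := ha'.trans_le hab
  have := hC.add_smul_mem hx hb ⟨div_nonneg ha hb0.le, div_le_one_of_le₀ hab hb0.le⟩
  rwa [smul_smul, div_mul_cancel₀ _ hb0.ne'] at this

lemma IsLocCompactSet.of_isClosed {Z : Type*} [TopologicalSpace Z] {S : Set Z} (hS : IsClosed S)
    (h : ∀ z ∈ S, ∃ T, IsLocCompactSet T ∧ ∃ N ∈ 𝓝 z, S ∩ N ⊆ T) : IsLocCompactSet S := by
  intro z hz
  obtain ⟨T, hT, N, hN, hST⟩ := h z hz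
  obtain ⟨K, -, hK, hKn⟩ := hT z (hST ⟨hz, mem_of_mem_nhds hN⟩)
  obtain ⟨U, hU, hUK⟩ := mem_nhdsWithin_iff_exists_mem_nhds_inter.1 hKn
  refine ⟨K ∩ S, inter_subset_right, hK.inter_right hS,
    mem_nhdsWithin_iff_exists_mem_nhds_inter.2 ⟨U ∩ N, inter_mem hU hN, ?_⟩⟩
  rintro y ⟨⟨hyU, hyN⟩, hyS⟩
  exact ⟨hUK ⟨hyU, hST ⟨hyS, hyN⟩⟩, hyS⟩

lemma IsLocCompactSet.mono_of_isClosed {Z : Type*} [TopologicalSpace Z] {S T : Set Z}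
    (hT : IsLocCompactSet T) (hS : IsClosed S) (hST : S ⊆ T) : IsLocCompactSet S :=
  .of_isClosed hS fun _ _ => ⟨T, hT, univ, univ_mem, inter_subset_left.trans hST⟩

section TopologicalVectorSpace

variable {Y : Type*} [AddCommGroup Y] [Module ℝ Y] [TopologicalSpace Y]
  [IsTopologicalAddGroup Y] [ContinuousSMul ℝ Y]

theorem Submodule.finiteDimensional_of_isLocCompactSet [T2Space Y] {R : Submodule ℝ Y}
    (hR : IsClosed (R : Set Y)) {S : Set Y} (hS : IsLocCompactSet S) {x₀ : Y} (hx₀ : x₀ ∈ S)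
    (hRS : ∀ d ∈ R, x₀ + d ∈ S) : FiniteDimensional ℝ R := by
  obtain ⟨K, -, hK, hKn⟩ := hS x₀ hx₀
  obtain ⟨U, hU, hUK⟩ := mem_nhdsWithin_iff_exists_mem_nhds_inter.1 hKn
  set e : R → Y := fun d => x₀ + d
  have he : Topology.IsClosedEmbedding e :=
    (Homeomorph.addLeft x₀).isClosedEmbedding.comp hR.isClosedEmbedding_subtypeVal
  have hK' : e ⁻¹' K ∈ 𝓝 (0 : R) := by
    refine mem_of_superset (he.continuous.continuousAt.preimage_mem_nhds (by simpa [e] using hU))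
      fun d hd => hUK ⟨hd, hRS d d.2⟩
  have := (he.isCompact_preimage hK).locallyCompactSpace_of_mem_nhds_of_addGroup hK'
  exact .of_locallyCompactSpace ℝ

variable [LocallyConvexSpace ℝ Y]

theorem Convex.isCompact_of_isLocCompactSet {C : Set Y} (hconv : Convex ℝ C) (hcl : IsClosed C)
    (hlc : IsLocCompactSet C) {x₀ : Y} (hx₀ : x₀ ∈ C)
    (hrec : ∀ v, (∀ s : ℝ, 0 < s → x₀ + s • v ∈ C) → v = 0) : IsCompact C := by
  obtain ⟨K, -, hK, hKn⟩ := hlc x₀ hx₀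
  obtain ⟨U, hU, hUK⟩ := mem_nhdsWithin_iff_exists_mem_nhds_inter.1 hKn
  have hU' : (x₀ + ·) ⁻¹' U ∈ 𝓝 (0 : Y) :=
    (continuous_const_add x₀).continuousAt.preimage_mem_nhds (by simpa using hU)
  obtain ⟨V, ⟨hV, hVcl⟩, hVU⟩ := (closed_nhds_basis (0 : Y)).mem_iff.1 hU'
  obtain ⟨W, ⟨hW, hWconv⟩, hWV⟩ := (LocallyConvexSpace.convex_basis_zero ℝ Y).mem_iff.1 hV
  -- `μ y` is the gauge distance from `x₀` to `y`; far points of `C`, pulled back to the unit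
  -- sphere of `μ`, accumulate at a nonzero recession direction
  set μ : Y → ℝ := fun y => gauge W (y - x₀)
  have hμ : Continuous μ := (continuous_gauge hWconv hW).comp (continuous_sub_right x₀)
  have hμ_smul : ∀ y {t : ℝ}, 0 ≤ t → μ (x₀ + t • (y - x₀)) = t * μ y := fun y t ht => by
    simp [μ, gauge_smul_of_nonneg ht]
  have hseg : ∀ y ∈ C, ∀ t : ℝ, 0 ≤ t → t ≤ 1 → x₀ + t • (y - x₀) ∈ C :=
    fun y hy t h0 h1 => hconv.add_smul_sub_mem hx₀ hy ⟨h0, h1⟩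
  have hA : IsCompact {y ∈ C | μ y ≤ 1} := by
    refine hK.of_isClosed_subset (hcl.inter (isClosed_le hμ continuous_const))
      fun y hy => hUK ⟨?_, hy.1⟩
    have : y - x₀ ∈ V :=
      hVcl.closure_subset_iff.2 hWV ((gauge_le_one_iff_mem_closure hWconv hW).1 hy.2)
    simpa using hVU this
  by_cases hbdd : ∃ N : ℝ, 1 ≤ N ∧ ∀ y ∈ C, μ y ≤ N
  · obtain ⟨N, hN, hCN⟩ := hbdd
    have hN0 : 0 < N := one_pos.trans_le hN
    refine (hA.image (f := fun y => x₀ + N • (y - x₀)) (by fun_prop)).of_isClosed_subset hcl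
      fun y hy => ⟨x₀ + N⁻¹ • (y - x₀), ⟨hseg y hy _ (by positivity) (inv_le_one_of_one_le₀ hN),
        ?_⟩, by simp [smul_smul, hN0.ne']⟩
    rw [hμ_smul y (by positivity), inv_mul_le_iff₀ hN0, mul_one]
    exact hCN y hy
  push Not at hbdd
  set E : ℕ → Set Y := fun n => {y ∈ C | μ y = 1 ∧ x₀ + (n : ℝ) • (y - x₀) ∈ C}
  have hE_cl : ∀ n, IsClosed (E n) := fun n =>
    hcl.inter ((isClosed_eq hμ continuous_const).inter (hcl.preimage (by fun_prop)))
  have hE_anti : ∀ n, E (n + 1) ⊆ E n := fun n y ⟨hy, hμy, hny⟩ =>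
    ⟨hy, hμy, hconv.add_smul_mem_of_le hx₀ n.cast_nonneg (by simp) hny⟩
  have hE_ne : ∀ n, (E n).Nonempty := by
    intro n
    obtain ⟨y, hy, hμy⟩ := hbdd (max n 1) (le_max_right _ _)
    have hpos : 0 < μ y := one_pos.trans_le ((le_max_right _ _).trans hμy.le)
    refine ⟨x₀ + (μ y)⁻¹ • (y - x₀), hseg y hy _ (by positivity) ?_, ?_, ?_⟩
    · exact inv_le_one_of_one_le₀ ((le_max_right _ _).trans hμy.le)
    · rw [hμ_smul y (by positivity), inv_mul_cancel₀ hpos.ne']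
    · rw [add_sub_cancel_left, smul_smul]
      refine hseg y hy _ (by positivity) ?_
      rw [mul_inv_le_iff₀ hpos, one_mul]
      exact (le_max_left _ _).trans hμy.le
  obtain ⟨y, hy⟩ := IsCompact.nonempty_iInter_of_sequence_nonempty_isCompact_isClosed E hE_anti
    hE_ne (hA.of_isClosed_subset (hE_cl 0) fun y hy => ⟨hy.1, hy.2.1.le⟩) hE_cl
  rw [mem_iInter] at hy
  have hy0 : y - x₀ = 0 := hrec _ fun s hs => by
    obtain ⟨n, hn⟩ := exists_nat_ge s
    exact hconv.add_smul_mem_of_le hx₀ hs.le hn (hy n).2.2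
  simpa [μ, hy0] using (hy 0).2.1

end TopologicalVectorSpace

section Lineality

variable {Y : Type*} [AddCommGroup Y] [Module ℝ Y] [TopologicalSpace Y]
  [IsTopologicalAddGroup Y] [ContinuousSMul ℝ Y] {g : Y → EReal} {R : Submodule ℝ Y}

lemma Submodule.isClosed_of_forall_add_smul_le (hlsc : LowerSemicontinuous g) {y₀ : Y} {r : ℝ}
    (hy₀ : g y₀ ≤ r) (hinv : ∀ y, ∀ d ∈ R, g (y + d) ≤ g y)
    (hrec : ∀ (r : ℝ) y d, (∀ s : ℝ, 0 < s → g (y + s • d) ≤ r) → d ∈ R) :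
    IsClosed (R : Set Y) := by
  have hcl : IsClosed {v | g (y₀ + v) ≤ r} :=
    (hlsc.isClosed_preimage (r : EReal)).preimage (continuous_const_add y₀)
  have hR : (R.topologicalClosure : Set Y) ⊆ {v | g (y₀ + v) ≤ r} := by
    rw [R.topologicalClosure_coe]
    exact hcl.closure_subset_iff.2 fun d hd => (hinv y₀ d hd).trans hy₀
  refine closure_subset_iff_isClosed.1 fun d hd => hrec r y₀ d fun s _ => hR ?_
  rw [← R.topologicalClosure_coe] at hd
  exact R.topologicalClosure.smul_mem s hd

lemma isCompact_sublevel_inter_ker [LocallyConvexSpace ℝ Y] [T2Space Y] (P : Y →L[ℝ] R)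
    (hP : ∀ d : R, P d = d) (hlsc : LowerSemicontinuous g)
    (hconv : ∀ r : ℝ, Convex ℝ {y | g y ≤ r}) (hlc : ∀ r : ℝ, IsLocCompactSet {y | g y ≤ r})
    (hrec : ∀ (r : ℝ) y d, (∀ s : ℝ, 0 < s → g (y + s • d) ≤ r) → d ∈ R) (r : ℝ) :
    IsCompact ({y | g y ≤ r} ∩ {y | P y = 0}) := by
  rcases eq_empty_or_nonempty ({y | g y ≤ r} ∩ {y | P y = 0}) with h | ⟨ξ, hξr, hξP⟩
  · simp [h]
  have hcl : IsClosed ({y | g y ≤ r} ∩ {y | P y = 0}) :=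
    (hlsc.isClosed_preimage (r : EReal)).inter (isClosed_eq P.continuous continuous_const)
  refine ((hconv r).inter (LinearMap.ker (P : Y →ₗ[ℝ] R)).convex).isCompact_of_isLocCompactSet hcl
    ((hlc r).mono_of_isClosed hcl inter_subset_left) ⟨hξr, hξP⟩ fun v hv => ?_
  have hvR : v ∈ R := hrec r ξ v fun s hs => (hv s hs).1
  have hPv : P v = 0 := by
    simpa [show P ξ = 0 from hξP] using (hv 1 one_pos).2
  simpa [hP ⟨v, hvR⟩] using congrArg Subtype.val hPv

theorem exists_forall_le_and_sublevel_eq_add [LocallyConvexSpace ℝ Y] [T2Space Y]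
    (hg : EProper g) (hlsc : LowerSemicontinuous g) (hconv : ∀ r : ℝ, Convex ℝ {y | g y ≤ r})
    (hlc : ∀ r : ℝ, IsLocCompactSet {y | g y ≤ r}) (hinv : ∀ y, ∀ d ∈ R, g (y + d) ≤ g y)
    (hrec : ∀ (r : ℝ) y d, (∀ s : ℝ, 0 < s → g (y + s • d) ≤ r) → d ∈ R) :
    ∃ ym, (∀ y, g ym ≤ g y) ∧ FiniteDimensional ℝ R ∧ ∃ K : Set Y, K.Nonempty ∧ Convex ℝ K ∧
      IsCompact K ∧ {y | g y ≤ g ym} = K + (R : Set Y) := by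
  obtain ⟨y₀, hy₀⟩ := hg.2
  have hy₀r : g y₀ ≤ (g y₀).toReal := EReal.le_coe_toReal hy₀
  have hfd : FiniteDimensional ℝ R :=
    Submodule.finiteDimensional_of_isLocCompactSet
      (R.isClosed_of_forall_add_smul_le hlsc hy₀r hinv hrec) (hlc _) hy₀r
      fun d hd => (hinv y₀ d hd).trans hy₀r
  obtain ⟨P, hP⟩ := Submodule.ClosedComplemented.of_finiteDimensional (𝕜 := ℝ) R
  have hW : ∀ y, y - P y ∈ {y | P y = 0} := fun y => by simp [hP]
  have hgW : ∀ y, g (y - P y) ≤ g y := fun y => by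
    simpa [sub_eq_add_neg] using hinv y _ (R.neg_mem (P y).2)
  have hcap := isCompact_sublevel_inter_ker P hP hlsc hconv hlc hrec
  obtain ⟨ym, ⟨hymr, hymW⟩, hmin⟩ := LowerSemicontinuousOn.exists_isMinOn
    (s := {y | g y ≤ (g y₀).toReal} ∩ {y | P y = 0})
    ⟨y₀ - P y₀, (hgW y₀).trans hy₀r, hW y₀⟩ (hcap _) (hlsc.lowerSemicontinuousOn _)
  have hglob : ∀ y, g ym ≤ g y := fun y => by
    by_cases hy : g y ≤ (g y₀).toReal
    · exact (hmin ⟨(hgW y).trans hy, hW y⟩).trans (hgW y)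
    · exact hymr.trans (not_le.1 hy).le
  have hym : g ym = (g ym).toReal :=
    (EReal.coe_toReal (ne_top_of_le_ne_top (EReal.coe_ne_top _) hymr) (hg.1 ym)).symm
  refine ⟨ym, hglob, hfd, {y | g y ≤ (g ym).toReal} ∩ {y | P y = 0},
    ⟨ym, hym.le, hymW⟩, (hconv _).inter (LinearMap.ker (P : Y →ₗ[ℝ] R)).convex, hcap _, ?_⟩
  rw [hym]
  ext y
  refine ⟨fun hy => ⟨y - P y, ⟨(hgW y).trans hy, hW y⟩, P y, (P y).2, sub_add_cancel y _⟩, ?_⟩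
  rintro ⟨k, ⟨hk, -⟩, d, hd, rfl⟩
  exact (hinv k d hd).trans hk

end Lineality

lemma EProper.sub_real {E : Type*} {F : E → EReal} (hF : EProper F) (φ : E → ℝ) :
    EProper fun x => F x - φ x := by
  obtain ⟨hbot, x, hx⟩ := hF
  exact ⟨fun y => EReal.sub_coe_ne_bot (hbot y) _, x, EReal.sub_coe_ne_top hx _⟩

instance {E : Type*} [AddCommGroup E] [Module ℝ E] [TopologicalSpace E] :
    LocallyConvexSpace ℝ (WeakSpace ℝ E) :=
  inferInstanceAs (LocallyConvexSpace ℝ (WeakBilin (topDualPairing ℝ E).flip))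

section Transfer

variable {E : Type*} [AddCommGroup E] [Module ℝ E] [TopologicalSpace E]

lemma image_fst_epiStar_rsum (f : ι → E → EReal) :
    Prod.fst '' {a ∈ epiStar (rsum f) | a.1 ∈ sumDomStar f} = sumDomStar f := by
  refine subset_antisymm (fun _ ⟨a, ha, hq⟩ => hq ▸ ha.2) fun q hq => ?_
  obtain ⟨J, hJ, hqJ⟩ := mem_iUnion₂.1 hq
  obtain ⟨qs, hqs, rfl⟩ := (Set.mem_finsetSum _ _ _).1 hqJ
  exact ⟨(_, _), ⟨econj_rsum_sum_le f hJ fun j hj => EReal.le_coe_toReal (hqs hj), hq⟩, rfl⟩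

theorem isSupOfAffine_rsum_sub [IsTopologicalAddGroup E] [ContinuousSMul ℝ E]
    [LocallyConvexSpace ℝ E] {f : ι → E → EReal} (hproper : ∀ i, EProper (f i))
    (hlsc : ∀ i, LowerSemicontinuous (f i)) (hconv : ∀ i, EConvexFn (f i)) (p : WeakDual ℝ E) :
    IsSupOfAffine (fun x => rsum f x - p x) ((fun a : WeakDual ℝ E × ℝ => (a.1 - p, a.2)) ''
      {a ∈ epiStar (rsum f) | a.1 ∈ sumDomStar f}) := by
  intro r x
  rw [EReal.sub_le_iff_le_add (.inl (EReal.coe_ne_bot _)) (.inl (EReal.coe_ne_top _)),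
    ← EReal.coe_add, rsum_le_coe_iff hproper hlsc hconv, forall_mem_image]
  refine ⟨fun H a ha => ?_, fun H q hq γ hγ => ?_⟩
  · have := H a.1 ha.2 a.2 ha.1
    simp only [sub_apply]
    linarith
  · have := @H (q, γ) ⟨hγ, hq⟩
    simp only [sub_apply] at this
    linarith

lemma WInfLocCompact.isLocCompactSet_sub {F : E → EReal} (hF : WInfLocCompact F)
    (p : WeakDual ℝ E) {r : ℝ} (hcl : IsClosed
      {z : WeakSpace ℝ E | F ((toWeakSpace ℝ E).symm z) - p ((toWeakSpace ℝ E).symm z) ≤ r}) :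
    IsLocCompactSet
      {z : WeakSpace ℝ E | F ((toWeakSpace ℝ E).symm z) - p ((toWeakSpace ℝ E).symm z) ≤ r} := by
  refine .of_isClosed hcl fun z _ => ⟨_, hF (r + p ((toWeakSpace ℝ E).symm z) + 1),
    {z' | p ((toWeakSpace ℝ E).symm z') < p ((toWeakSpace ℝ E).symm z) + 1},
    (isOpen_lt p.continuous_apply_toWeakSpace_symm continuous_const).mem_nhds (by simp), ?_⟩
  rintro z' ⟨hz', hp⟩
  rw [mem_ofPred_eq, EReal.sub_le_iff_le_add (.inl (EReal.coe_ne_bot _))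
    (.inl (EReal.coe_ne_top _))] at hz'
  rw [mem_ofPred_eq] at hp
  rw [LinearEquiv.image_eq_preimage_symm]
  exact hz'.trans (by exact_mod_cast (by linarith))

lemma primalSol_eq_of_forall_le {F : E → EReal} {p : WeakDual ℝ E} {xm : E}
    (h : ∀ x, F xm - p xm ≤ F x - p x) : primalSol F p = {x | F x - p x ≤ F xm - p xm} := by
  have hval : primalVal F p = F xm - p xm := le_antisymm (iInf_le _ xm) (le_iInf h)
  ext x
  simp only [primalSol, hval, mem_ofPred_eq]
  exact ⟨le_of_eq, fun hx => le_antisymm hx (h x)⟩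

lemma exists_wcompact_add_of_image_eq {S : Set E} {K : Set (WeakSpace ℝ E)}
    {R : Submodule ℝ (WeakSpace ℝ E)} [FiniteDimensional ℝ R] (hKne : K.Nonempty)
    (hKconv : Convex ℝ K) (hK : IsCompact K) (hS : toWeakSpace ℝ E '' S = K + (R : Set _)) :
    ∃ (K' : Set E) (V : Submodule ℝ E), K'.Nonempty ∧ Convex ℝ K' ∧ WCompact K' ∧
      FiniteDimensional ℝ V ∧ S = K' + (V : Set E) := by
  refine ⟨(toWeakSpace ℝ E).symm '' K, R.map (toWeakSpace ℝ E).symm.toLinearMap, hKne.image _,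
    hKconv.linear_image _, ?_, inferInstance, ?_⟩
  · simpa [WCompact, image_image] using hK
  · rw [Submodule.map_coe, LinearEquiv.coe_toLinearMap, ← Set.image_add, ← hS]
    simp [image_image]

end Transfer

theorem primal_solutions_existence_general (f : ι → X → EReal) (p : WeakDual ℝ X)
    (hproper : ∀ i, EProper (f i)) (hlsc : ∀ i, LowerSemicontinuous (f i))
    (hconv : ∀ i, EConvexFn (f i))
    (hfproper : EProper (rsum f)) (hflc : WInfLocCompact (rsum f))
    (hcone : ∃ V : Submodule ℝ (WeakDual ℝ X),
      closure (coneHull (convexHull ℝ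
        ((fun q => q - p) '' (⋃ J ∈ {J : Finset ι | J.Nonempty}, ∑ j ∈ J, edomStar (f j)))))
        = (V : Set (WeakDual ℝ X))) :
    (primalSol (rsum f) p).Nonempty ∧
    ∃ (K : Set X) (V : Submodule ℝ X), K.Nonempty ∧ Convex ℝ K ∧ WCompact K ∧
      FiniteDimensional ℝ V ∧ primalSol (rsum f) p = K + (V : Set X) := by
  obtain ⟨V, hV⟩ := hcone
  set A := (fun a : WeakDual ℝ X × ℝ => (a.1 - p, a.2)) ''
    {a ∈ epiStar (rsum f) | a.1 ∈ sumDomStar f}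
  have hA : IsSupOfAffine (fun x => rsum f x - p x) A := isSupOfAffine_rsum_sub hproper hlsc hconv p
  have hfst : Prod.fst '' A = (fun q => q - p) '' sumDomStar f := by
    rw [← image_fst_epiStar_rsum f, image_image, image_image]
  set τ := toWeakSpace ℝ X
  have hG : EProper fun z => rsum f (τ.symm z) - p (τ.symm z) := by
    obtain ⟨hbot, x, hx⟩ := hfproper.sub_real p
    exact ⟨fun z => hbot _, τ x, by simpa using hx⟩
  obtain ⟨zm, hmin, hfd, K, hKne, hKconv, hK, hsub⟩ := exists_forall_le_and_sublevel_eq_add hG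
    hA.lowerSemicontinuous hA.convex_sublevel
    (fun r => hflc.isLocCompactSet_sub p (hA.lowerSemicontinuous.isClosed_preimage r))
    (fun z _ hd => hA.le_of_mem_preannihilator z hd) fun _ _ _ => hA.mem_preannihilator (hfst ▸ hV)
  have hsol := primalSol_eq_of_forall_le (xm := τ.symm zm) fun x => by simpa using hmin (τ x)
  have himage : τ '' primalSol (rsum f) p = K + (preannihilator (Prod.fst '' A) : Set _) := by
    rw [hsol, LinearEquiv.image_eq_preimage_symm]
    exact hsub
  exact ⟨⟨τ.symm zm, by simp [hsol]⟩, exists_wcompact_add_of_image_eq hKne hKconv hK himage⟩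

/-- **Theorem 3.3 (Existence of optimal solutions).** Let `(f i)_{i ∈ ι} ⊆ Γ(X)`, with robust
sum `f` proper and weakly inf-locally compact, and assume that the `w*`-closed conic hull of
the convex hull of `(⋃_{J ∈ 𝓕(ι)} Σ_{j ∈ J} dom f_j*) − x̄*` is a linear subspace of `X*`.
Then `sol(RP_{x̄*})` is nonempty; more precisely, it is the sum of a nonempty convex weakly
compact set and a finite-dimensional linear subspace of `X`. -/
theorem primal_solutions_existence [Nonempty ι] (f : ι → X → EReal) (p : WeakDual ℝ X)
    (hproper : ∀ i, EProper (f i)) (hlsc : ∀ i, LowerSemicontinuous (f i))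
    (hconv : ∀ i, EConvexFn (f i))
    (hfproper : EProper (rsum f)) (hflc : WInfLocCompact (rsum f))
    (hcone : ∃ V : Submodule ℝ (WeakDual ℝ X),
      closure (coneHull (convexHull ℝ
        ((fun q => q - p) '' (⋃ J ∈ {J : Finset ι | J.Nonempty}, ∑ j ∈ J, edomStar (f j)))))
        = (V : Set (WeakDual ℝ X))) :
    (primalSol (rsum f) p).Nonempty ∧
    ∃ (K : Set X) (V : Submodule ℝ X), K.Nonempty ∧ Convex ℝ K ∧ WCompact K ∧
      FiniteDimensional ℝ V ∧ primalSol (rsum f) p = K + (V : Set X) :=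
  primal_solutions_existence_general f p hproper hlsc hconv hfproper hflc hcone
end
end

section
/- Let X be a real locally convex Hausdorff topological vector space with topological dual X* (equipped with the weak* topology σ(X*,X)), and let φ : X* → ℝ∪{±∞} be a function whose conjugate φ* : X → ℝ∪{±∞}, φ*(x) := sup_{x*∈X*} (⟨x*,x⟩ − φ(x*)), has nonempty domain. Then the w*-closed convex hull of dom φ equals the w*-closure of dom φ**, where φ** is the biconjugate of φ (computed on X*); equivalently, the w*-closed convex hull of dom φ equals the w*-closure of the domain of the w*-closed convex hull of φ. -/
open scoped Pointwise Topology
open Set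

noncomputable section

variable {X : Type*} [AddCommGroup X] [Module ℝ X] [TopologicalSpace X]
  [IsTopologicalAddGroup X] [ContinuousSMul ℝ X] [LocallyConvexSpace ℝ X] [T2Space X]
variable {ι : Type*}

/-- Conjugate (on `X`) of a function defined on the dual. -/
def starConj (φ : WeakDual ℝ X → EReal) (x : X) : EReal :=
  ⨆ q : WeakDual ℝ X, (q x : EReal) - φ q

/-- Biconjugate (back on `X*`) of a function defined on the dual. -/
def starBiconj (φ : WeakDual ℝ X → EReal) (q : WeakDual ℝ X) : EReal :=
  ⨆ x : X, (q x : EReal) - starConj φ x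

instance : LocallyConvexSpace ℝ (WeakDual ℝ X) := WeakBilin.locallyConvexSpace

/-- Every continuous linear functional on the weak* dual is evaluation at a point of `X`. -/
theorem exists_eval_of_continuous (g : WeakDual ℝ X →L[ℝ] ℝ) :
    ∃ x : X, ∀ p : WeakDual ℝ X, g p = p x := by
  have hind : Topology.IsInducing (fun (p : WeakDual ℝ X) (y : X) => p y) := ⟨rfl⟩
  have hm : g ⁻¹' Set.Ioo (-1 : ℝ) 1 ∈ 𝓝 (0 : WeakDual ℝ X) := by
    refine g.continuous.continuousAt.preimage_mem_nhds ?_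
    rw [map_zero]
    exact Ioo_mem_nhds (by norm_num) (by norm_num)
  rw [hind.nhds_eq_comap] at hm
  obtain ⟨t, ht, hsub⟩ := hm
  rw [nhds_pi] at ht
  obtain ⟨I, hIfin, U, hU, hIU⟩ := Filter.mem_pi.1 ht
  haveI : Finite I := hIfin.to_subtype
  -- the evaluation functionals indexed by `I`
  let L : I → (WeakDual ℝ X →ₗ[ℝ] ℝ) := fun i =>
    { toFun := fun p => p (i : X)
      map_add' := fun p q => rfl
      map_smul' := fun c p => rfl }
  have hker : ⨅ i : I, LinearMap.ker (L i) ≤ LinearMap.ker (g : WeakDual ℝ X →ₗ[ℝ] ℝ) := by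
    intro p hp
    simp only [Submodule.mem_iInf, LinearMap.mem_ker] at hp
    have key : ∀ c : ℝ, c * g p ∈ Set.Ioo (-1 : ℝ) 1 := by
      intro c
      have hmem : (fun y : X => (c • p) y) ∈ I.pi U := by
        intro i hi
        have hpi : (c • p) (i : X) = 0 := by
          have h0 : p i = 0 := hp ⟨i, hi⟩
          show c • p (i : X) = 0
          rw [h0, smul_zero]
        show (c • p) (i : X) ∈ U i
        rw [hpi]
        exact mem_of_mem_nhds (hU i)
      have := hsub (hIU hmem)
      simpa using this
    simp only [LinearMap.mem_ker, ContinuousLinearMap.coe_coe]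
    by_contra hgp
    have h2 := key (2 / g p)
    rw [div_mul_cancel₀ 2 hgp] at h2
    simp only [Set.mem_Ioo] at h2
    linarith [h2.2]
  have hspan := mem_span_of_iInf_ker_le_ker (𝕜 := ℝ) hker
  obtain ⟨c, hc⟩ := Finsupp.mem_span_range_iff_exists_finsupp.1 hspan
  refine ⟨c.sum fun i a => a • (i : X), fun p => ?_⟩
  have h1 : g p = (c.sum fun i a => a • L i) p := by rw [hc]; rfl
  rw [h1, map_finsuppSum p]
  simp only [Finsupp.sum, LinearMap.coe_sum, Finset.sum_apply, LinearMap.smul_apply,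
    map_smul, smul_eq_mul]
  rfl

private lemma real_sub_eq_bot {r : ℝ} {b : EReal} (h : (r : EReal) - b = ⊥) : b = ⊤ := by
  induction b using EReal.rec with
  | bot => rw [EReal.coe_sub_bot] at h; exact absurd h (by simp)
  | coe s => rw [← EReal.coe_sub] at h; exact absurd h (EReal.coe_ne_bot _)
  | top => rfl

private lemma sub_top_eq_bot (a : EReal) : a - ⊤ = ⊥ := by
  rw [sub_eq_add_neg, EReal.neg_top, EReal.add_bot]

private lemma exists_real {a : EReal} (h1 : a ≠ ⊥) (h2 : a ≠ ⊤) : ∃ r : ℝ, a = (r : EReal) := by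
  induction a using EReal.rec with
  | bot => exact absurd rfl h1
  | coe r => exact ⟨r, rfl⟩
  | top => exact absurd rfl h2

private lemma le_starConj (φ : WeakDual ℝ X → EReal) (q : WeakDual ℝ X) (x : X) :
    (q x : EReal) - φ q ≤ starConj φ x := by
  unfold starConj; exact le_iSup (fun p : WeakDual ℝ X => ((p x : ℝ) : EReal) - φ p) q

private lemma le_starBiconj (φ : WeakDual ℝ X → EReal) (q : WeakDual ℝ X) (x : X) :
    (q x : EReal) - starConj φ x ≤ starBiconj φ q := by
  unfold starBiconj; exact le_iSup (fun y : X => ((q y : ℝ) : EReal) - starConj φ y) x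

/-- **Equation (2.5).** If `φ : X* → ℝ ∪ {±∞}` has `dom φ* ≠ ∅`, then the `w*`-closed convex
hull of `dom φ` equals the `w*`-closure of `dom φ**` (`φ** = co-closure of `φ`, computed on
`X*` with its weak* topology). -/
theorem closed_convex_hull_dom_eq (φ : WeakDual ℝ X → EReal)
    (hdom : ∃ x : X, starConj φ x ≠ ⊤) :
    closure (convexHull ℝ {q : WeakDual ℝ X | φ q ≠ ⊤}) =
      closure {q : WeakDual ℝ X | starBiconj φ q ≠ ⊤} := by
  obtain ⟨x₀, hx₀⟩ := hdom
  by_cases hbot : ∃ x : X, starConj φ x = ⊥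
  · -- degenerate case: both domains are empty
    obtain ⟨x₁, hx₁⟩ := hbot
    have hDempty : {q : WeakDual ℝ X | φ q ≠ ⊤} = ∅ := by
      ext q
      simp only [mem_setOf_eq, mem_empty_iff_false, iff_false, not_not]
      have h1 : (q x₁ : EReal) - φ q ≤ ⊥ := hx₁ ▸ le_starConj φ q x₁
      exact real_sub_eq_bot (le_bot_iff.1 h1)
    have hBempty : {q : WeakDual ℝ X | starBiconj φ q ≠ ⊤} = ∅ := by
      ext q
      simp only [mem_setOf_eq, mem_empty_iff_false, iff_false, not_not]
      have h1 : (q x₁ : EReal) - starConj φ x₁ ≤ starBiconj φ q := le_starBiconj φ q x₁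
      rw [hx₁, EReal.coe_sub_bot] at h1
      exact top_le_iff.1 h1
    rw [hDempty, hBempty, convexHull_empty]
  · push_neg at hbot
    obtain ⟨r₀, hr₀⟩ := exists_real (hbot x₀) hx₀
    -- the convex "bounded above by `starConj` + const" predicate
    set P : Set (WeakDual ℝ X) :=
      {q | ∃ c : ℝ, ∀ x, starConj φ x ≠ ⊤ → q x ≤ (starConj φ x).toReal + c} with hP
    have hPconv : Convex ℝ P := by
      rintro q₁ ⟨c₁, h₁⟩ q₂ ⟨c₂, h₂⟩ a b ha hb hab
      refine ⟨a * c₁ + b * c₂, fun x hx => ?_⟩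
      have e : (a • q₁ + b • q₂) x = a * q₁ x + b * q₂ x := rfl
      rw [e]
      have key : a * ((starConj φ x).toReal + c₁) + b * ((starConj φ x).toReal + c₂)
          = (starConj φ x).toReal + (a * c₁ + b * c₂) := by
        linear_combination (starConj φ x).toReal * hab
      linarith [mul_le_mul_of_nonneg_left (h₁ x hx) ha,
        mul_le_mul_of_nonneg_left (h₂ x hx) hb]
    have hDP : {q : WeakDual ℝ X | φ q ≠ ⊤} ⊆ P := by
      intro q hq
      by_cases hqb : φ q = ⊥
      · refine ⟨0, fun x hx => absurd ?_ hx⟩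
        have h1 : (q x : EReal) - φ q ≤ starConj φ x := le_starConj φ q x
        rw [hqb, EReal.coe_sub_bot] at h1
        exact top_le_iff.1 h1
      · obtain ⟨r, hr⟩ := exists_real hqb hq
        refine ⟨r, fun x hx => ?_⟩
        obtain ⟨t, ht⟩ := exists_real (hbot x) hx
        have h1 : (q x : EReal) - φ q ≤ starConj φ x := le_starConj φ q x
        rw [hr, ht, ← EReal.coe_sub, EReal.coe_le_coe_iff] at h1
        rw [ht, EReal.toReal_coe]
        linarith
    have hPB : P ⊆ {q : WeakDual ℝ X | starBiconj φ q ≠ ⊤} := by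
      rintro q ⟨c, hc⟩
      have hle : starBiconj φ q ≤ (c : EReal) := by
        unfold starBiconj
        refine iSup_le fun x => ?_
        by_cases hx : starConj φ x = ⊤
        · rw [hx, sub_top_eq_bot]; exact bot_le
        · obtain ⟨t, ht⟩ := exists_real (hbot x) hx
          rw [ht, ← EReal.coe_sub]
          refine EReal.coe_le_coe_iff.2 ?_
          have := hc x hx
          rw [ht, EReal.toReal_coe] at this
          linarith
      exact fun htop => absurd (htop ▸ hle) (EReal.coe_lt_top c).not_ge
    refine Set.Subset.antisymm (closure_mono ((convexHull_min hDP hPconv).trans hPB)) ?_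
    refine closure_minimal ?_ isClosed_closure
    intro q₀ hq₀
    by_contra hq₀C
    obtain ⟨f, u, hfa, hfq₀⟩ := geometric_hahn_banach_closed_point
      ((convex_convexHull ℝ _).closure) isClosed_closure hq₀C
    obtain ⟨x, hx⟩ := exists_eval_of_continuous f
    rw [hx q₀] at hfq₀
    have hDx : ∀ q : WeakDual ℝ X, φ q ≠ ⊤ → q x < u := by
      intro q hq
      have := hfa q (subset_closure (subset_convexHull ℝ _ hq))
      rwa [hx q] at this
    have key : ∀ n : ℕ, starConj φ (x₀ + (n : ℝ) • x) ≤ ((r₀ + n * u : ℝ) : EReal) := by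
      intro n
      unfold starConj
      refine iSup_le fun q => ?_
      by_cases hq : φ q = ⊤
      · rw [hq, sub_top_eq_bot]; exact bot_le
      · have hqx : q x < u := hDx q hq
        have e : q (x₀ + (n : ℝ) • x) = q x₀ + n * q x := by
          simp [smul_eq_mul]
        rw [e]
        have h1 : ((q x₀ + n * q x : ℝ) : EReal) - φ q
            = ((q x₀ : EReal) - φ q) + ((n * q x : ℝ) : EReal) := by
          by_cases hqb : φ q = ⊥
          · rw [hqb, EReal.coe_sub_bot, EReal.coe_sub_bot, EReal.top_add_coe]
          · obtain ⟨s, hs⟩ := exists_real hqb hq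
            rw [hs, ← EReal.coe_sub, ← EReal.coe_sub, ← EReal.coe_add]
            norm_cast
            ring
        rw [h1]
        have h2 : (q x₀ : EReal) - φ q ≤ (r₀ : EReal) := hr₀ ▸ le_starConj φ q x₀
        have h3 : ((n * q x : ℝ) : EReal) ≤ ((n * u : ℝ) : EReal) :=
          EReal.coe_le_coe_iff.2 (mul_le_mul_of_nonneg_left hqx.le (Nat.cast_nonneg n))
        calc ((q x₀ : EReal) - φ q) + ((n * q x : ℝ) : EReal)
            ≤ (r₀ : EReal) + ((n * u : ℝ) : EReal) := add_le_add h2 h3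
          _ = ((r₀ + n * u : ℝ) : EReal) := (EReal.coe_add _ _).symm
    have lower : ∀ n : ℕ,
        ((q₀ x₀ + n * q₀ x - (r₀ + n * u) : ℝ) : EReal) ≤ starBiconj φ q₀ := by
      intro n
      refine le_trans ?_ (le_starBiconj φ q₀ (x₀ + (n : ℝ) • x))
      have e : q₀ (x₀ + (n : ℝ) • x) = q₀ x₀ + n * q₀ x := by
        simp [smul_eq_mul]
      rw [e]
      calc ((q₀ x₀ + n * q₀ x - (r₀ + n * u) : ℝ) : EReal)
          = ((q₀ x₀ + n * q₀ x : ℝ) : EReal) - ((r₀ + n * u : ℝ) : EReal) := by norm_cast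
        _ ≤ ((q₀ x₀ + n * q₀ x : ℝ) : EReal) - starConj φ (x₀ + (n : ℝ) • x) :=
            EReal.sub_le_sub le_rfl (key n)
    apply hq₀
    rw [EReal.eq_top_iff_forall_lt]
    intro y
    have hd : 0 < q₀ x - u := by linarith
    obtain ⟨n, hn⟩ := exists_nat_gt ((y - (q₀ x₀ - r₀)) / (q₀ x - u))
    refine lt_of_lt_of_le ?_ (lower n)
    rw [show (y : EReal) = ((y : ℝ) : EReal) from rfl]
    refine EReal.coe_lt_coe_iff.2 ?_
    rw [div_lt_iff₀ hd] at hn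
    nlinarith
end
end

section
/- Let X be a real locally convex Hausdorff topological vector space with topological dual X*, let (f_i)_{i∈I} be a family of proper functions f_i : X → ℝ∪{+∞} with robust sum f, let x̄* ∈ X*, let x ∈ dom f, and let (J,(x_j*)_{j∈J}) ∈ 𝔽(x̄*). Then the following are equivalent: (i) x is an optimal solution of (RP_{x̄*}), (J,(x_j*)_{j∈J}) is an optimal solution of (RD_{x̄*}), and inf(RP_{x̄*}) = sup(RD_{x̄*}); (ii) Σ_{j∈J} f_j(x) = f(x) (i.e., J ∈ S_f(x)) and x_j* ∈ ∂f_j(x) for all j ∈ J. -/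
open scoped Pointwise Topology
open Set

noncomputable section

variable {X : Type*} [AddCommGroup X] [Module ℝ X] [TopologicalSpace X]
  [IsTopologicalAddGroup X] [ContinuousSMul ℝ X] [LocallyConvexSpace ℝ X] [T2Space X]
variable {ι : Type*}

section AuxLemmas

variable {X : Type*} [AddCommGroup X] [Module ℝ X] [TopologicalSpace X]
  [IsTopologicalAddGroup X] [ContinuousSMul ℝ X] [LocallyConvexSpace ℝ X] [T2Space X]
variable {ι : Type*}

lemma weakDual_sum_apply (K : Finset ι) (ys : ι → WeakDual ℝ X) (y : X) :
    (∑ j ∈ K, ys j) y = ∑ j ∈ K, ys j y := by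
  induction K using Finset.cons_induction with
  | empty => exact rfl
  | cons a s ha ih =>
    rw [Finset.sum_cons, Finset.sum_cons, ← ih]
    exact rfl

lemma ecoe_sum (K : Finset ι) (r : ι → ℝ) :
    ((∑ j ∈ K, r j : ℝ) : EReal) = ∑ j ∈ K, ((r j : ℝ) : EReal) := by
  induction K using Finset.cons_induction with
  | empty => simp
  | cons a s ha ih => rw [Finset.sum_cons, Finset.sum_cons, EReal.coe_add, ih]

lemma esum_ne_bot (K : Finset ι) (t : ι → EReal) (h : ∀ j ∈ K, t j ≠ ⊥) :
    ∑ j ∈ K, t j ≠ ⊥ := by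
  induction K using Finset.cons_induction with
  | empty => simp
  | cons a s ha ih =>
    rw [Finset.sum_cons, Ne, EReal.add_eq_bot_iff]
    push_neg
    exact ⟨h a (Finset.mem_cons_self a s), ih fun j hj => h j (Finset.mem_cons_of_mem hj)⟩

lemma esum_eq_top (K : Finset ι) (t : ι → EReal) (h : ∀ j ∈ K, t j ≠ ⊥)
    {j0 : ι} (hj0 : j0 ∈ K) (htop : t j0 = ⊤) : ∑ j ∈ K, t j = ⊤ := by
  classical
  rw [← Finset.add_sum_erase K t hj0, htop]
  exact EReal.top_add_of_ne_bot
    (esum_ne_bot _ _ fun j hj => h j (Finset.mem_of_mem_erase hj))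

lemma subdiff_iff_conj (g : X → EReal) (hgbot : ∀ y, g y ≠ ⊥) (q : WeakDual ℝ X)
    (x : X) (a : ℝ) (hax : g x = (a : EReal)) :
    q ∈ esubdiff g x ↔ econj g q = ((q x - a : ℝ) : EReal) := by
  constructor
  · rintro ⟨-, -, hineq⟩
    refine le_antisymm (iSup_le fun y => ?_) ?_
    · by_cases hy : g y = ⊤
      · rw [hy, EReal.sub_top]; exact bot_le
      · have hby : g y = ((g y).toReal : EReal) := (EReal.coe_toReal hy (hgbot y)).symm
        have h1 := hineq y
        rw [hax, hby, ← EReal.coe_add, EReal.coe_le_coe_iff] at h1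
        rw [hby, ← EReal.coe_sub, EReal.coe_le_coe_iff]
        linarith
    · have h2 : ((q x - a : ℝ) : EReal) = (q x : EReal) - g x := by
        rw [hax]; exact EReal.coe_sub _ _
      rw [h2]
      exact le_iSup (fun y => (q y : EReal) - g y) x
  · intro h
    refine ⟨hax ▸ EReal.coe_ne_bot a, hax ▸ EReal.coe_ne_top a, fun y => ?_⟩
    by_cases hy : g y = ⊤
    · rw [hy]; exact le_top
    · have hby : g y = ((g y).toReal : EReal) := (EReal.coe_toReal hy (hgbot y)).symm
      have h1 : (q y : EReal) - g y ≤ ((q x - a : ℝ) : EReal) :=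
        h ▸ le_iSup (fun z => (q z : EReal) - g z) y
      rw [hby, ← EReal.coe_sub, EReal.coe_le_coe_iff] at h1
      rw [hax, hby, ← EReal.coe_add, EReal.coe_le_coe_iff]
      linarith

lemma weak_duality (f : ι → X → EReal) (p : WeakDual ℝ X)
    (hproper : ∀ i, EProper (f i)) (K : Finset ι) (ys : ι → WeakDual ℝ X)
    (hfeas : dualFeas p K ys) : dualObj f K ys ≤ primalVal (rsum f) p := by
  obtain ⟨hK, hsum⟩ := hfeas
  refine le_iInf fun y => ?_
  by_cases htop : ∃ j ∈ K, f j y = ⊤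
  · obtain ⟨j0, hj0, hj0t⟩ := htop
    have h1 : rsum f y = ⊤ := by
      have h2 : ∑ j ∈ K, f j y = ⊤ :=
        esum_eq_top K _ (fun j _ => (hproper j).1 y) hj0 hj0t
      have h3 : ∑ j ∈ K, f j y ≤ rsum f y := le_iSup₂_of_le K hK le_rfl
      rw [h2] at h3; exact top_le_iff.mp h3
    rw [h1, EReal.top_sub_coe]
    exact le_top
  · push_neg at htop
    set b : ι → ℝ := fun j => (f j y).toReal with hb
    have hby : ∀ j ∈ K, f j y = (b j : EReal) := fun j hj =>
      (EReal.coe_toReal (htop j hj) ((hproper j).1 y)).symm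
    have hle1 : ((p y - ∑ j ∈ K, b j : ℝ) : EReal) ≤ ∑ j ∈ K, econj (f j) (ys j) := by
      have hterm : ∀ j ∈ K, ((ys j y - b j : ℝ) : EReal) ≤ econj (f j) (ys j) := by
        intro j hj
        have h4 : ((ys j y - b j : ℝ) : EReal) = ((ys j) y : EReal) - f j y := by
          rw [hby j hj]; exact EReal.coe_sub _ _
        rw [h4]
        exact le_iSup (fun z => ((ys j) z : EReal) - f j z) y
      calc ((p y - ∑ j ∈ K, b j : ℝ) : EReal)
          = ((∑ j ∈ K, (ys j y - b j) : ℝ) : EReal) := by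
            rw [Finset.sum_sub_distrib, ← hsum, weakDual_sum_apply]
        _ = ∑ j ∈ K, ((ys j y - b j : ℝ) : EReal) := ecoe_sum _ _
        _ ≤ _ := Finset.sum_le_sum hterm
    have hle2 : dualObj f K ys ≤ ((∑ j ∈ K, b j - p y : ℝ) : EReal) := by
      show -∑ j ∈ K, econj (f j) (ys j) ≤ _
      calc -∑ j ∈ K, econj (f j) (ys j)
          ≤ -((p y - ∑ j ∈ K, b j : ℝ) : EReal) := EReal.neg_le_neg_iff.mpr hle1
        _ = ((∑ j ∈ K, b j - p y : ℝ) : EReal) := by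
            rw [← EReal.coe_neg]; norm_num
    refine hle2.trans ?_
    have hsb : ((∑ j ∈ K, b j : ℝ) : EReal) ≤ rsum f y := by
      have h5 : ∑ j ∈ K, f j y = ((∑ j ∈ K, b j : ℝ) : EReal) := by
        rw [ecoe_sum]; exact Finset.sum_congr rfl hby
      rw [← h5]; exact le_iSup₂_of_le K hK le_rfl
    calc ((∑ j ∈ K, b j - p y : ℝ) : EReal)
        = ((∑ j ∈ K, b j : ℝ) : EReal) - ((p y : ℝ) : EReal) := EReal.coe_sub _ _
      _ ≤ rsum f y - (p y : EReal) := EReal.sub_le_sub hsb le_rfl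

end AuxLemmas

/-- **Theorem 4.1 (Primal-dual optimality with zero duality gap).** Let all `f i` be proper,
`x ∈ dom f` (`f` the robust sum), and `(J, (x_j*)_{j ∈ J}) ∈ 𝔽(x̄*)`. Then the following are
equivalent: (i) `x ∈ sol(RP_{x̄*})`, `(J, (x_j*)) ∈ sol(RD_{x̄*})` and
`inf(RP_{x̄*}) = sup(RD_{x̄*})`; (ii) `J ∈ S_f(x)` and `x_j* ∈ ∂f_j(x)` for all `j ∈ J`. -/
theorem primal_dual_optimality [Nonempty ι] (f : ι → X → EReal) (p : WeakDual ℝ X)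
    (x : X) (J : Finset ι) (xs : ι → WeakDual ℝ X)
    (hproper : ∀ i, EProper (f i)) (hx : rsum f x ≠ ⊤) (hfeas : dualFeas p J xs) :
    (x ∈ primalSol (rsum f) p ∧ dualSol f p J xs ∧ primalVal (rsum f) p = dualVal f p)
    ↔ (J ∈ Ssets f x ∧ ∀ j ∈ J, xs j ∈ esubdiff (f j) x) := by
  obtain ⟨hJne, hsum⟩ := id hfeas
  have hbot : ∀ i y, f i y ≠ ⊥ := fun i y => (hproper i).1 y
  have hfjtop : ∀ j, f j x ≠ ⊤ := by
    intro j hj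
    apply hx
    have h1 : f j x ≤ rsum f x := by
      have h' : ∑ i ∈ ({j} : Finset ι), f i x ≤ rsum f x :=
        le_iSup₂_of_le {j} (Finset.singleton_nonempty j) le_rfl
      simpa using h'
    rw [hj] at h1; exact top_le_iff.mp h1
  set a : ι → ℝ := fun j => (f j x).toReal with ha
  have hax : ∀ j, f j x = (a j : EReal) := fun j =>
    (EReal.coe_toReal (hfjtop j) (hbot j x)).symm
  have hSsum : ∑ j ∈ J, f j x = ((∑ j ∈ J, a j : ℝ) : EReal) := by
    rw [ecoe_sum]; exact Finset.sum_congr rfl fun j _ => hax j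
  have hSle : ((∑ j ∈ J, a j : ℝ) : EReal) ≤ rsum f x :=
    hSsum ▸ le_iSup₂_of_le J hJne le_rfl
  have hfxbot : rsum f x ≠ ⊥ := fun h => by
    rw [h, le_bot_iff] at hSle; exact EReal.coe_ne_bot _ hSle
  set F : ℝ := (rsum f x).toReal with hFdef
  have hFx : rsum f x = (F : EReal) := (EReal.coe_toReal hx hfxbot).symm
  have hSF : ∑ j ∈ J, a j ≤ F := by
    rw [hFx] at hSle; exact EReal.coe_le_coe_iff.mp hSle
  have hpx : (p x : ℝ) = ∑ j ∈ J, xs j x := by rw [← hsum, weakDual_sum_apply]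
  have hprimal_at_x : rsum f x - (p x : EReal) = ((F - p x : ℝ) : EReal) := by
    rw [hFx, EReal.coe_sub]
  have hwd : dualVal f p ≤ primalVal (rsum f) p :=
    iSup_le fun K => iSup_le fun ys => iSup_le fun hf => weak_duality f p hproper K ys hf
  have hdualobj_le : dualObj f J xs ≤ dualVal f p :=
    le_iSup_of_le J (le_iSup_of_le xs (le_iSup_of_le hfeas le_rfl))
  have hprimal_le : primalVal (rsum f) p ≤ ((F - p x : ℝ) : EReal) :=
    hprimal_at_x ▸ iInf_le _ x
  have hconj_ge : ∀ j, ((xs j x - a j : ℝ) : EReal) ≤ econj (f j) (xs j) := by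
    intro j
    have h4 : ((xs j x - a j : ℝ) : EReal) = ((xs j) x : EReal) - f j x := by
      rw [hax j]; exact EReal.coe_sub _ _
    rw [h4]
    exact le_iSup (fun z => ((xs j) z : EReal) - f j z) x
  constructor
  · rintro ⟨hP, hD, hE⟩
    have hPval : primalVal (rsum f) p = ((F - p x : ℝ) : EReal) := by
      rw [← hP, hprimal_at_x]
    have hDobj : dualObj f J xs = ((F - p x : ℝ) : EReal) := by
      rw [hD.2, ← hE, hPval]
    have hsumconj : ∑ j ∈ J, econj (f j) (xs j) = ((p x - F : ℝ) : EReal) := by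
      have h6 : -∑ j ∈ J, econj (f j) (xs j) = ((F - p x : ℝ) : EReal) := hDobj
      have h7 := congrArg Neg.neg h6
      rw [neg_neg, ← EReal.coe_neg] at h7
      rw [h7]; norm_num
    have hconj_ne_bot : ∀ j ∈ J, econj (f j) (xs j) ≠ ⊥ := by
      intro j _ h
      have h9 := hconj_ge j
      rw [h, le_bot_iff] at h9
      exact EReal.coe_ne_bot _ h9
    have hconj_ne_top : ∀ j ∈ J, econj (f j) (xs j) ≠ ⊤ := by
      intro j hj h
      have h9 : ∑ i ∈ J, econj (f i) (xs i) = ⊤ := esum_eq_top J _ hconj_ne_bot hj h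
      rw [hsumconj] at h9
      exact EReal.coe_ne_top _ h9
    set g : ι → ℝ := fun j => (econj (f j) (xs j)).toReal with hg
    have hgc : ∀ j ∈ J, econj (f j) (xs j) = (g j : EReal) := fun j hj =>
      (EReal.coe_toReal (hconj_ne_top j hj) (hconj_ne_bot j hj)).symm
    have hsumg : ∑ j ∈ J, g j = p x - F := by
      have h10 : ∑ j ∈ J, econj (f j) (xs j) = ((∑ j ∈ J, g j : ℝ) : EReal) := by
        rw [ecoe_sum]; exact Finset.sum_congr rfl hgc
      rw [h10, EReal.coe_eq_coe_iff] at hsumconj; exact hsumconj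
    have hge : ∀ j ∈ J, xs j x - a j ≤ g j := by
      intro j hj
      have h11 := hconj_ge j
      rw [hgc j hj, EReal.coe_le_coe_iff] at h11; exact h11
    have hsum_e : ∑ j ∈ J, (xs j x - a j) = p x - ∑ j ∈ J, a j := by
      rw [Finset.sum_sub_distrib, ← hpx]
    have hSFeq : ∑ j ∈ J, a j = F := by
      have h11 : p x - ∑ j ∈ J, a j ≤ ∑ j ∈ J, g j := hsum_e ▸ Finset.sum_le_sum hge
      rw [hsumg] at h11
      linarith
    have heach : ∀ j ∈ J, g j = xs j x - a j := by
      have h12 : ∑ j ∈ J, (g j - (xs j x - a j)) = 0 := by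
        rw [Finset.sum_sub_distrib, hsumg, hsum_e, hSFeq]
        ring
      have h13 := (Finset.sum_eq_zero_iff_of_nonneg
        (fun j hj => sub_nonneg.mpr (hge j hj))).mp h12
      intro j hj
      have h14 := h13 j hj
      linarith
    refine ⟨⟨hJne, hx, by rw [hSsum, hFx, hSFeq]⟩, fun j hj => ?_⟩
    exact (subdiff_iff_conj (f j) (hbot j) (xs j) x (a j) (hax j)).mpr
      (by rw [hgc j hj, heach j hj])
  · rintro ⟨⟨-, -, hSeq⟩, hsub⟩
    have hSFeq : ∑ j ∈ J, a j = F := by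
      rw [hSsum, hFx, EReal.coe_eq_coe_iff] at hSeq; exact hSeq
    have hconj_eq : ∀ j ∈ J, econj (f j) (xs j) = ((xs j x - a j : ℝ) : EReal) :=
      fun j hj => (subdiff_iff_conj (f j) (hbot j) (xs j) x (a j) (hax j)).mp (hsub j hj)
    have hDobj : dualObj f J xs = ((F - p x : ℝ) : EReal) := by
      show -∑ j ∈ J, econj (f j) (xs j) = _
      have h8 : ∑ j ∈ J, econj (f j) (xs j) = ((∑ j ∈ J, (xs j x - a j) : ℝ) : EReal) := by
        rw [ecoe_sum]; exact Finset.sum_congr rfl hconj_eq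
      rw [h8, ← EReal.coe_neg, EReal.coe_eq_coe_iff]
      rw [Finset.sum_sub_distrib, ← hpx, hSFeq]
      ring
    have h1 : ((F - p x : ℝ) : EReal) ≤ dualVal f p := hDobj ▸ hdualobj_le
    have hPV : primalVal (rsum f) p = ((F - p x : ℝ) : EReal) :=
      le_antisymm hprimal_le (h1.trans hwd)
    have hDV : dualVal f p = ((F - p x : ℝ) : EReal) :=
      le_antisymm (hwd.trans hprimal_le) h1
    refine ⟨?_, ⟨hfeas, by rw [hDobj, hDV]⟩, by rw [hPV, hDV]⟩
    show rsum f x - (p x : EReal) = primalVal (rsum f) p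
    rw [hprimal_at_x, hPV]
end
end

section
/- Let X be a real locally convex Hausdorff topological vector space with topological dual X*, let (f_i)_{i∈I} be a family of proper functions f_i : X → ℝ∪{+∞} with robust sum f, let x̄* ∈ X*, let x ∈ dom f, and assume strong duality holds: inf(RP_{x̄*}) = max(RD_{x̄*}) (i.e., the dual optimal value is attained and equals the primal value). Then the following are equivalent: (i) x is an optimal solution of (RP_{x̄*}); (ii) for every (J,(x_j*)_{j∈J}) ∈ sol(RD_{x̄*}), one has J ∈ S_f(x) and x_j* ∈ ∂f_j(x) for all j ∈ J; (iii) there exists (J,(x_j*)_{j∈J}) ∈ sol(RD_{x̄*}) with J ∈ S_f(x) and x_j* ∈ ∂f_j(x) for all j ∈ J; (iv) there exists (J,(x_j*)_{j∈J}) ∈ 𝔽(x̄*) with J ∈ S_f(x) and x_j* ∈ ∂f_j(x) for all j ∈ J. Moreover, for any (J,(x_j*)_{j∈J}) ∈ sol(RD_{x̄*}), sol(RP_{x̄*}) = T_f(J) ∩ (⋂_{j∈J} M_{f_j}(x_j*)). -/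
open scoped Pointwise Topology
open Set

noncomputable section

variable {X : Type*} [AddCommGroup X] [Module ℝ X] [TopologicalSpace X]
  [IsTopologicalAddGroup X] [ContinuousSMul ℝ X] [LocallyConvexSpace ℝ X] [T2Space X]
variable {ι : Type*}

section Helpers
set_option linter.unusedSectionVars false

lemma coe_fsum {α : Type*} (J : Finset α) (g : α → ℝ) :
    ((∑ j ∈ J, g j : ℝ) : EReal) = ∑ j ∈ J, (g j : EReal) := by
  induction J using Finset.cons_induction with
  | empty => simp
  | cons a s ha ih => simp [Finset.sum_cons, ih]

lemma weakdual_sum_apply {ι : Type*} (J : Finset ι) (xs : ι → WeakDual ℝ X) (x : X) :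
    (∑ j ∈ J, xs j) x = ∑ j ∈ J, xs j x := by
  induction J using Finset.cons_induction with
  | empty => rfl
  | cons a s ha ih => rw [Finset.sum_cons, Finset.sum_cons, ← ih]; rfl

lemma fsum_ne_bot {α : Type*} {J : Finset α} {g : α → EReal} (h : ∀ j ∈ J, g j ≠ ⊥) :
    ∑ j ∈ J, g j ≠ ⊥ := by
  induction J using Finset.cons_induction with
  | empty => simp
  | cons a s ha ih =>
      rw [Finset.sum_cons]
      intro hc
      rcases EReal.add_eq_bot_iff.1 hc with h1 | h1
      · exact h a (Finset.mem_cons_self _ _) h1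
      · exact ih (fun j hj => h j (Finset.mem_cons.2 (Or.inr hj))) h1

lemma fterm_ne_top {α : Type*} {J : Finset α} {g : α → EReal} (hb : ∀ j ∈ J, g j ≠ ⊥)
    (ht : ∑ j ∈ J, g j ≠ ⊤) : ∀ j ∈ J, g j ≠ ⊤ := by
  classical
  intro j hj hc
  apply ht
  rw [← Finset.add_sum_erase _ _ hj, hc]
  exact EReal.top_add_of_ne_bot (fsum_ne_bot fun i hi => hb i (Finset.mem_of_mem_erase hi))

lemma ereal_shift {r pa pz : ℝ} {e : EReal} (he : e ≠ ⊥) :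
    ((r + (pz - pa) : ℝ) : EReal) ≤ e ↔ ((r - pa : ℝ) : EReal) ≤ e - (pz : EReal) := by
  induction e using EReal.rec with
  | bot => exact absurd rfl he
  | coe s =>
      rw [show ((s : EReal) - (pz : EReal)) = ((s - pz : ℝ) : EReal) from (EReal.coe_sub s pz).symm]
      rw [EReal.coe_le_coe_iff, EReal.coe_le_coe_iff]
      constructor <;> intro h <;> linarith
  | top => simp [EReal.top_sub_coe]

lemma ereal_flip {r pa pz : ℝ} {e : EReal} (he : e ≠ ⊥)
    (h : ((r - pa : ℝ) : EReal) ≤ e - (pz : EReal)) :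
    (pz : EReal) - e ≤ ((pa - r : ℝ) : EReal) := by
  induction e using EReal.rec with
  | bot => exact absurd rfl he
  | coe s =>
      rw [show ((s : EReal) - (pz : EReal)) = ((s - pz : ℝ) : EReal) from (EReal.coe_sub s pz).symm,
        EReal.coe_le_coe_iff] at h
      rw [show ((pz : EReal) - (s : EReal)) = ((pz - s : ℝ) : EReal) from (EReal.coe_sub pz s).symm,
        EReal.coe_le_coe_iff]
      linarith
  | top =>
      rw [show (pz : EReal) - ⊤ = ⊥ by rw [sub_eq_add_neg, EReal.neg_top, EReal.add_bot]]
      exact bot_le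

lemma ereal_unflip {r pa pz : ℝ} {e : EReal} (he : e ≠ ⊥)
    (h : (pz : EReal) - e ≤ ((pa - r : ℝ) : EReal)) :
    ((r - pa : ℝ) : EReal) ≤ e - (pz : EReal) := by
  induction e using EReal.rec with
  | bot => exact absurd rfl he
  | coe s =>
      rw [show ((pz : EReal) - (s : EReal)) = ((pz - s : ℝ) : EReal) from (EReal.coe_sub pz s).symm,
        EReal.coe_le_coe_iff] at h
      rw [show ((s : EReal) - (pz : EReal)) = ((s - pz : ℝ) : EReal) from (EReal.coe_sub s pz).symm,
        EReal.coe_le_coe_iff]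
      linarith
  | top => rw [EReal.top_sub_coe]; exact le_top

lemma fenchel_young (f : X → EReal) (p : WeakDual ℝ X) (z : X) :
    (p z : EReal) - f z ≤ econj f p :=
  le_iSup (fun y => (p y : EReal) - f y) z

lemma econj_ne_bot {f : X → EReal} (hp : EProper f) (p : WeakDual ℝ X) :
    econj f p ≠ ⊥ := by
  obtain ⟨z, hz⟩ := hp.2
  have h1 := fenchel_young f p z
  rw [← EReal.coe_toReal hz (hp.1 z)] at h1
  rw [show ((p z : ℝ) : EReal) - (((f z).toReal : ℝ) : EReal)
      = ((p z - (f z).toReal : ℝ) : EReal) from (EReal.coe_sub _ _).symm] at h1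
  intro hc
  rw [hc, le_bot_iff] at h1
  exact EReal.coe_ne_bot _ h1

lemma esubdiff_iff' {f : X → EReal} {p : WeakDual ℝ X} {a : X} {r : ℝ}
    (hbot : ∀ z, f z ≠ ⊥) (hfa : f a = (r : EReal)) :
    p ∈ esubdiff f a ↔ ∀ z, f a - (p a : EReal) ≤ f z - (p z : EReal) := by
  constructor
  · rintro ⟨-, -, h⟩ z
    have hz := h z
    rw [hfa, ← EReal.coe_add] at hz
    rw [hfa, ← EReal.coe_sub]
    exact (ereal_shift (hbot z)).1 hz
  · intro h
    refine ⟨by rw [hfa]; exact EReal.coe_ne_bot r, by rw [hfa]; exact EReal.coe_ne_top r,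
      fun z => ?_⟩
    have hz := h z
    rw [hfa, ← EReal.coe_sub] at hz
    rw [hfa, ← EReal.coe_add]
    exact (ereal_shift (hbot z)).2 hz

lemma econj_eq_of_min {f : X → EReal} {p : WeakDual ℝ X} {a : X} {r : ℝ}
    (hbot : ∀ z, f z ≠ ⊥) (hfa : f a = (r : EReal))
    (hmin : ∀ z, f a - (p a : EReal) ≤ f z - (p z : EReal)) :
    econj f p = ((p a - r : ℝ) : EReal) := by
  refine le_antisymm (iSup_le fun z => ?_) ?_
  · have h := hmin z
    rw [hfa, ← EReal.coe_sub] at h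
    exact ereal_flip (hbot z) h
  · have h := fenchel_young f p a
    rwa [hfa, ← EReal.coe_sub] at h

lemma mem_esubdiff_of_conj {f : X → EReal} {p : WeakDual ℝ X} {a : X} {r : ℝ}
    (hbot : ∀ z, f z ≠ ⊥) (hfa : f a = (r : EReal))
    (hc : econj f p = ((p a - r : ℝ) : EReal)) : p ∈ esubdiff f a := by
  rw [esubdiff_iff' hbot hfa]
  intro z
  have h := fenchel_young f p z
  rw [hc] at h
  rw [hfa, ← EReal.coe_sub]
  exact ereal_unflip (hbot z) h

lemma mem_Mmap_of_esubdiff {f : X → EReal} {p : WeakDual ℝ X} {a : X} {r : ℝ}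
    (hbot : ∀ z, f z ≠ ⊥) (hfa : f a = (r : EReal)) (h : p ∈ esubdiff f a) :
    a ∈ Mmap f p := by
  have hmin := (esubdiff_iff' hbot hfa).1 h
  have hconj := econj_eq_of_min hbot hfa hmin
  exact ⟨by rw [hconj]; exact EReal.coe_ne_bot _, by rw [hconj]; exact EReal.coe_ne_top _, hmin⟩

lemma esubdiff_of_Mmap {f : X → EReal} {p : WeakDual ℝ X} {a : X} {r : ℝ}
    (hbot : ∀ z, f z ≠ ⊥) (hfa : f a = (r : EReal)) (h : a ∈ Mmap f p) :
    p ∈ esubdiff f a :=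
  (esubdiff_iff' hbot hfa).2 h.2.2

lemma le_rsum_of {ι : Type*} (f : ι → X → EReal) (y : X) {J : Finset ι} (hJ : J.Nonempty) :
    ∑ j ∈ J, f j y ≤ rsum f y :=
  le_iSup_of_le J (le_iSup_of_le hJ le_rfl)

lemma single_le_rsum {ι : Type*} (f : ι → X → EReal) (y : X) (j : ι) :
    f j y ≤ rsum f y := by
  have := le_rsum_of f y (Finset.singleton_nonempty j)
  rwa [Finset.sum_singleton] at this

lemma primalVal_le (f : X → EReal) (p : WeakDual ℝ X) (y : X) :
    primalVal f p ≤ f y - (p y : EReal) :=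
  iInf_le _ y

lemma dualObj_le_dualVal {ι : Type*} (f : ι → X → EReal) (p : WeakDual ℝ X)
    {J : Finset ι} {xs : ι → WeakDual ℝ X} (hfeas : dualFeas p J xs) :
    dualObj f J xs ≤ dualVal f p :=
  le_iSup_of_le J (le_iSup_of_le xs (le_iSup_of_le hfeas le_rfl))

lemma rsum_sub_eq_dualObj {ι : Type*} (f : ι → X → EReal) (p : WeakDual ℝ X) (y : X)
    (hproper : ∀ i, EProper (f i)) {J : Finset ι} {xs : ι → WeakDual ℝ X}
    (hfeas : dualFeas p J xs) (hS : J ∈ Ssets f y)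
    (hsub : ∀ j ∈ J, xs j ∈ esubdiff (f j) y) :
    rsum f y - (p y : EReal) = dualObj f J xs := by
  obtain ⟨hJne, hyt, hsum⟩ := hS
  have hfjy : ∀ j ∈ J, f j y = (((f j y).toReal : ℝ) : EReal) := fun j hj =>
    (EReal.coe_toReal (hsub j hj).2.1 ((hproper j).1 y)).symm
  have hconj : ∀ j ∈ J, econj (f j) (xs j) = ((xs j y - (f j y).toReal : ℝ) : EReal) := fun j hj =>
    econj_eq_of_min (fun z => (hproper j).1 z) (hfjy j hj)
      ((esubdiff_iff' (fun z => (hproper j).1 z) (hfjy j hj)).1 (hsub j hj))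
  have hpy : ∑ j ∈ J, xs j y = p y := by rw [← weakdual_sum_apply, hfeas.2]
  have hR : rsum f y = ((∑ j ∈ J, (f j y).toReal : ℝ) : EReal) := by
    rw [← hsum, coe_fsum]
    exact Finset.sum_congr rfl hfjy
  have hsum2 : ∑ j ∈ J, econj (f j) (xs j)
      = ((∑ j ∈ J, (xs j y - (f j y).toReal) : ℝ) : EReal) := by
    rw [coe_fsum]
    exact Finset.sum_congr rfl hconj
  unfold dualObj
  rw [hsum2, hR, ← EReal.coe_sub, Finset.sum_sub_distrib, hpy, ← EReal.coe_neg]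
  exact congrArg _ (by ring)

lemma mem_primalSol_of {ι : Type*} (f : ι → X → EReal) (p : WeakDual ℝ X) (y : X)
    (hproper : ∀ i, EProper (f i)) (hgap : primalVal (rsum f) p = dualVal f p)
    {J : Finset ι} {xs : ι → WeakDual ℝ X} (hfeas : dualFeas p J xs) (hS : J ∈ Ssets f y)
    (hsub : ∀ j ∈ J, xs j ∈ esubdiff (f j) y) :
    y ∈ primalSol (rsum f) p := by
  have hC := rsum_sub_eq_dualObj f p y hproper hfeas hS hsub
  have h1 : rsum f y - (p y : EReal) ≤ primalVal (rsum f) p := by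
    rw [hC, hgap]; exact dualObj_le_dualVal f p hfeas
  exact le_antisymm h1 (primalVal_le (rsum f) p y)

lemma forcing {ι : Type*} (f : ι → X → EReal) (p : WeakDual ℝ X)
    (hproper : ∀ i, EProper (f i)) {y : X} (hyt : rsum f y ≠ ⊤)
    (hysol : y ∈ primalSol (rsum f) p) (hgap : primalVal (rsum f) p = dualVal f p)
    {J : Finset ι} {xs : ι → WeakDual ℝ X} (hsol : dualSol f p J xs) :
    J ∈ Ssets f y ∧ ∀ j ∈ J, xs j ∈ esubdiff (f j) y := by
  obtain ⟨⟨hJne, hfeq⟩, hval⟩ := hsol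
  obtain ⟨j₀, hj₀⟩ := hJne
  have hysol' : rsum f y - (p y : EReal) = primalVal (rsum f) p := hysol
  have hfy : ∀ j, f j y ≠ ⊤ := fun j h => hyt (top_le_iff.1 (h ▸ single_le_rsum f y j))
  set r : ι → ℝ := fun j => (f j y).toReal with hrdef
  have hr : ∀ j, f j y = ((r j : ℝ) : EReal) := fun j =>
    (EReal.coe_toReal (hfy j) ((hproper j).1 y)).symm
  have hrb : rsum f y ≠ ⊥ := by
    intro h
    have h2 := single_le_rsum f y j₀
    rw [h, le_bot_iff, hr j₀] at h2
    exact EReal.coe_ne_bot _ h2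
  set R := (rsum f y).toReal with hRdef
  have hR : rsum f y = (R : EReal) := (EReal.coe_toReal hyt hrb).symm
  have hprim : primalVal (rsum f) p = ((R - p y : ℝ) : EReal) := by
    rw [← hysol', hR, ← EReal.coe_sub]
  have hobj : dualObj f J xs = ((R - p y : ℝ) : EReal) := by
    rw [hval, ← hgap, hprim]
  have hsumconj : ∑ j ∈ J, econj (f j) (xs j) = ((p y - R : ℝ) : EReal) := by
    have h2 := congrArg Neg.neg hobj
    rw [dualObj, neg_neg, ← EReal.coe_neg] at h2
    rw [h2]
    exact congrArg _ (by ring)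
  have hcb : ∀ j ∈ J, econj (f j) (xs j) ≠ ⊥ := fun j _ => econj_ne_bot (hproper j) (xs j)
  have hct : ∀ j ∈ J, econj (f j) (xs j) ≠ ⊤ :=
    fterm_ne_top hcb (by rw [hsumconj]; exact EReal.coe_ne_top _)
  set c : ι → ℝ := fun j => (econj (f j) (xs j)).toReal with hcdef
  have hc : ∀ j ∈ J, econj (f j) (xs j) = ((c j : ℝ) : EReal) := fun j hj =>
    (EReal.coe_toReal (hct j hj) (hcb j hj)).symm
  have hsumc : ∑ j ∈ J, c j = p y - R := by
    have h3 : ((∑ j ∈ J, c j : ℝ) : EReal) = ((p y - R : ℝ) : EReal) := by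
      rw [coe_fsum, ← hsumconj]
      exact (Finset.sum_congr rfl hc).symm
    exact_mod_cast h3
  have hFY : ∀ j ∈ J, xs j y - r j ≤ c j := by
    intro j hj
    have h := fenchel_young (f j) (xs j) y
    rw [hr j, hc j hj, ← EReal.coe_sub] at h
    exact_mod_cast h
  have hpy : ∑ j ∈ J, xs j y = p y := by rw [← weakdual_sum_apply, hfeq]
  have hsfr : ((∑ j ∈ J, f j y : EReal)) = ((∑ j ∈ J, r j : ℝ) : EReal) := by
    rw [coe_fsum]
    exact Finset.sum_congr rfl fun j _ => hr j
  have hsumr : ∑ j ∈ J, r j ≤ R := by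
    have h := le_rsum_of f y ⟨j₀, hj₀⟩
    rw [hR, hsfr] at h
    exact_mod_cast h
  have h1 : ∑ j ∈ J, (xs j y - r j) = p y - ∑ j ∈ J, r j := by
    rw [Finset.sum_sub_distrib, hpy]
  have h2 : ∑ j ∈ J, (xs j y - r j) ≤ ∑ j ∈ J, c j := Finset.sum_le_sum hFY
  have key : ∑ j ∈ J, (xs j y - r j) = ∑ j ∈ J, c j := by linarith
  have hterm := (Finset.sum_eq_sum_iff_of_le hFY).1 key
  have hrR : ∑ j ∈ J, r j = R := by linarith
  have hsumfy : ∑ j ∈ J, f j y = rsum f y := by rw [hsfr, hrR, hR]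
  refine ⟨⟨⟨j₀, hj₀⟩, hyt, hsumfy⟩, fun j hj => ?_⟩
  apply mem_esubdiff_of_conj (fun z => (hproper j).1 z) (hr j)
  rw [hc j hj]
  exact congrArg _ (hterm j hj).symm


end Helpers

/-- **Corollary 4.2.** Let all `f i` be proper, `x ∈ dom f`, and assume strong duality
`inf(RP_{x̄*}) = max(RD_{x̄*})` (the dual value is attained and equals the primal value). Then
(i) `x ∈ sol(RP_{x̄*})`, (ii) every dual solution satisfies the optimality conditions at `x`,
(iii) some dual solution does, and (iv) some dual feasible point does, are all equivalent;
moreover `sol(RP_{x̄*}) = T_f(J) ∩ ⋂_{j ∈ J} M_{f_j}(x_j*)` for any dual solution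
`(J, (x_j*))`. -/
theorem primal_solution_characterization [Nonempty ι] (f : ι → X → EReal) (p : WeakDual ℝ X)
    (x : X) (hproper : ∀ i, EProper (f i)) (hx : rsum f x ≠ ⊤)
    (hattained : ∃ (J : Finset ι) (xs : ι → WeakDual ℝ X), dualSol f p J xs)
    (hgap : primalVal (rsum f) p = dualVal f p) :
    ((x ∈ primalSol (rsum f) p ↔
        ∀ (J : Finset ι) (xs : ι → WeakDual ℝ X), dualSol f p J xs →
          J ∈ Ssets f x ∧ ∀ j ∈ J, xs j ∈ esubdiff (f j) x) ∧
      (x ∈ primalSol (rsum f) p ↔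
        ∃ (J : Finset ι) (xs : ι → WeakDual ℝ X), dualSol f p J xs ∧
          J ∈ Ssets f x ∧ ∀ j ∈ J, xs j ∈ esubdiff (f j) x) ∧
      (x ∈ primalSol (rsum f) p ↔
        ∃ (J : Finset ι) (xs : ι → WeakDual ℝ X), dualFeas p J xs ∧
          J ∈ Ssets f x ∧ ∀ j ∈ J, xs j ∈ esubdiff (f j) x)) ∧
    (∀ (J : Finset ι) (xs : ι → WeakDual ℝ X), dualSol f p J xs →
      primalSol (rsum f) p = Tset f J ∩ ⋂ j ∈ J, Mmap (f j) (xs j)) := by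
  obtain ⟨J₀, xs₀, hsol₀⟩ := hattained
  have hxb : rsum f x ≠ ⊥ := by
    intro h
    have h2 := single_le_rsum f x (Classical.arbitrary ι)
    rw [h, le_bot_iff] at h2
    exact (hproper _).1 x h2
  have hPtop : primalVal (rsum f) p ≠ ⊤ := by
    have h := primalVal_le (rsum f) p x
    rw [← EReal.coe_toReal hx hxb, ← EReal.coe_sub] at h
    exact (h.trans_lt (EReal.coe_lt_top _)).ne
  have hdom : ∀ y ∈ primalSol (rsum f) p, rsum f y ≠ ⊤ := by
    intro y hy hc
    have hy' : rsum f y - (p y : EReal) = primalVal (rsum f) p := hy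
    apply hPtop
    rw [← hy', hc, EReal.top_sub_coe]
  have hfin : ∀ y, rsum f y ≠ ⊤ → ∀ j, f j y = (((f j y).toReal : ℝ) : EReal) := by
    intro y hyt j
    exact (EReal.coe_toReal (fun h => hyt (top_le_iff.1 (h ▸ single_le_rsum f y j)))
      ((hproper j).1 y)).symm
  have hMore : ∀ (J : Finset ι) (xs : ι → WeakDual ℝ X), dualSol f p J xs →
      primalSol (rsum f) p = Tset f J ∩ ⋂ j ∈ J, Mmap (f j) (xs j) := by
    intro J xs hsol
    ext y
    simp only [Set.mem_inter_iff, Set.mem_iInter, Tset, Set.mem_setOf_eq]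
    constructor
    · intro hy
      obtain ⟨hS, hsub⟩ := forcing f p hproper (hdom y hy) hy hgap hsol
      exact ⟨hS, fun j hj => mem_Mmap_of_esubdiff (fun z => (hproper j).1 z)
        (hfin y (hdom y hy) j) (hsub j hj)⟩
    · rintro ⟨hS, hM⟩
      exact mem_primalSol_of f p y hproper hgap hsol.1 hS fun j hj =>
        esubdiff_of_Mmap (fun z => (hproper j).1 z) (hfin y hS.2.1 j) (hM j hj)
  refine ⟨⟨?_, ?_, ?_⟩, hMore⟩
  · constructor
    · intro hxp J xs hsol
      exact forcing f p hproper (hdom x hxp) hxp hgap hsol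
    · intro h
      obtain ⟨hS, hsub⟩ := h J₀ xs₀ hsol₀
      exact mem_primalSol_of f p x hproper hgap hsol₀.1 hS hsub
  · constructor
    · intro hxp
      exact ⟨J₀, xs₀, hsol₀, forcing f p hproper (hdom x hxp) hxp hgap hsol₀⟩
    · rintro ⟨J, xs, hsol, hS, hsub⟩
      exact mem_primalSol_of f p x hproper hgap hsol.1 hS hsub
  · constructor
    · intro hxp
      exact ⟨J₀, xs₀, hsol₀.1, forcing f p hproper (hdom x hxp) hxp hgap hsol₀⟩
    · rintro ⟨J, xs, hfeas, hS, hsub⟩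
      exact mem_primalSol_of f p x hproper hgap hfeas hS hsub
end
end

section
/- Let X be a real locally convex Hausdorff topological vector space with topological dual X*, and let (f_i)_{i∈I} be a family of proper functions f_i : X → ℝ∪{+∞} with robust sum f. Assume the stable strong duality condition: inf(RP_{x*}) = max(RD_{x*}) for every x* in ⋃_{x∈X} ∂f(x). Then for every x ∈ X, ∂f(x) = ⋃_{J ∈ S_f(x)} Σ_{j∈J} ∂f_j(x), where Σ_{j∈J} ∂f_j(x) is the Minkowski sum of the subdifferentials. -/
open scoped Pointwise Topology
open Set

noncomputable section

variable {X : Type*} [AddCommGroup X] [Module ℝ X] [TopologicalSpace X]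
  [IsTopologicalAddGroup X] [ContinuousSMul ℝ X] [LocallyConvexSpace ℝ X] [T2Space X]
variable {ι : Type*}

private lemma ereal_sum_ne_bot' {ι : Type*} {J : Finset ι} {g : ι → EReal}
    (h : ∀ j ∈ J, g j ≠ ⊥) : ∑ j ∈ J, g j ≠ ⊥ := by
  classical
  induction J using Finset.induction with
  | empty => simp
  | insert a s hij ih =>
    rw [Finset.sum_insert hij]
    simp only [ne_eq, EReal.add_eq_bot_iff, not_or]
    exact ⟨h a (Finset.mem_insert_self a s),
      ih fun j hj => h j (Finset.mem_insert_of_mem hj)⟩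

private lemma ereal_sum_ne_top' {ι : Type*} {J : Finset ι} {g : ι → EReal}
    (hb : ∀ j ∈ J, g j ≠ ⊥) (ht : ∑ j ∈ J, g j ≠ ⊤) : ∀ j ∈ J, g j ≠ ⊤ := by
  classical
  intro j hj hcontra
  apply ht
  rw [← Finset.add_sum_erase J g hj, hcontra]
  exact EReal.top_add_of_ne_bot (ereal_sum_ne_bot' fun i hi => hb i (Finset.mem_of_mem_erase hi))

private lemma ereal_coe_sum' {ι : Type*} (J : Finset ι) (r : ι → ℝ) :
    ((∑ j ∈ J, r j : ℝ) : EReal) = ∑ j ∈ J, ((r j : ℝ) : EReal) :=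
  map_sum (⟨⟨(↑), EReal.coe_zero⟩, EReal.coe_add⟩ : ℝ →+ EReal) r J

/-- **Corollary 4.4 (subdifferential of the robust sum).** Let `(f i)_{i ∈ ι}` be proper
functions with robust sum `f` and assume stable strong duality:
`inf(RP_{x*}) = max(RD_{x*})` for every `x* ∈ ⋃_{x ∈ X} ∂f(x)`. Then
`∂f(x) = ⋃_{J ∈ S_f(x)} Σ_{j ∈ J} ∂f_j(x)` for every `x ∈ X`. -/
theorem subdiff_robust_sum_formula [Nonempty ι] (f : ι → X → EReal)
    (hproper : ∀ i, EProper (f i))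
    (hstable : ∀ q : WeakDual ℝ X, q ∈ (⋃ x : X, esubdiff (rsum f) x) →
      (∃ (J : Finset ι) (xs : ι → WeakDual ℝ X), dualSol f q J xs) ∧
        primalVal (rsum f) q = dualVal f q) :
    ∀ x : X, esubdiff (rsum f) x = ⋃ J ∈ Ssets f x, ∑ j ∈ J, esubdiff (f j) x := by
  classical
  have heval : ∀ (J : Finset ι) (xs : ι → WeakDual ℝ X) (y : X),
      (∑ j ∈ J, xs j) y = ∑ j ∈ J, xs j y := fun J xs y =>
    map_sum (⟨⟨fun p : WeakDual ℝ X => p y, rfl⟩, fun p q => rfl⟩ : WeakDual ℝ X →+ ℝ) xs J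
  have hle_rsum : ∀ (J : Finset ι), J.Nonempty → ∀ y : X, ∑ j ∈ J, f j y ≤ rsum f y :=
    fun J hJ y => le_iSup_of_le J (le_iSup_of_le hJ le_rfl)
  have hconj_ge : ∀ (i : ι) (q : WeakDual ℝ X) (y : X),
      (q y : EReal) - f i y ≤ econj (f i) q :=
    fun i q y => le_iSup (fun z => (q z : EReal) - f i z) y
  have hconj_ne_bot : ∀ (i : ι) (q : WeakDual ℝ X), econj (f i) q ≠ ⊥ := by
    intro i q
    obtain ⟨x0, hx0⟩ := (hproper i).2
    have h1 := hconj_ge i q x0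
    have h2 : ((q x0 - (f i x0).toReal : ℝ) : EReal) = (q x0 : EReal) - f i x0 := by
      rw [EReal.coe_sub, EReal.coe_toReal hx0 ((hproper i).1 x0)]
    intro hbot
    rw [hbot, le_bot_iff] at h1
    exact EReal.coe_ne_bot _ (h2 ▸ h1)
  intro x
  ext p
  simp only [Set.mem_iUnion]
  constructor
  · intro hp
    obtain ⟨hFb, hFt, hFsub⟩ := hp
    set fx := (rsum f x).toReal with hfxdef
    have hFx : rsum f x = (fx : EReal) := (EReal.coe_toReal hFt hFb).symm
    obtain ⟨⟨J, xs, ⟨⟨hJne, hxsum⟩, hobj⟩⟩, hpd⟩ :=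
      hstable p (Set.mem_iUnion.mpr ⟨x, hFb, hFt, hFsub⟩)
    -- primal value computation
    have hprim : primalVal (rsum f) p = ((fx - p x : ℝ) : EReal) := by
      apply le_antisymm
      · refine iInf_le_of_le x ?_
        rw [hFx, ← EReal.coe_sub]
      · refine le_iInf fun y => ?_
        have h1 := hFsub y
        rw [hFx, ← EReal.coe_add] at h1
        calc ((fx - p x : ℝ) : EReal)
            = ((fx + (p y - p x) : ℝ) : EReal) + ((-(p y) : ℝ) : EReal) := by
              rw [← EReal.coe_add, EReal.coe_eq_coe_iff]; ring
          _ ≤ rsum f y + ((-(p y) : ℝ) : EReal) := add_le_add_left h1 _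
          _ = rsum f y - ((p y : ℝ) : EReal) := by
              rw [EReal.coe_neg, sub_eq_add_neg]
    have hdual : (-∑ j ∈ J, econj (f j) (xs j)) = ((fx - p x : ℝ) : EReal) := by
      have h := hobj
      unfold dualObj at h
      rw [h, ← hpd, hprim]
    have hS : ∑ j ∈ J, econj (f j) (xs j) = ((p x - fx : ℝ) : EReal) := by
      have h := congrArg Neg.neg hdual
      rw [neg_neg, ← EReal.coe_neg] at h
      rw [h, EReal.coe_eq_coe_iff]; ring
    -- finiteness of f j x on J
    have hsum_le : ∑ j ∈ J, f j x ≤ (fx : EReal) := hFx ▸ hle_rsum J hJne x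
    have hb : ∀ j ∈ J, f j x ≠ ⊥ := fun j _ => (hproper j).1 x
    have ht : ∀ j ∈ J, f j x ≠ ⊤ := ereal_sum_ne_top' hb (by
      intro hc; rw [hc, top_le_iff] at hsum_le; exact EReal.coe_ne_top fx hsum_le)
    set a : ι → ℝ := fun j => (f j x).toReal with hadef
    have haj : ∀ j ∈ J, f j x = ((a j : ℝ) : EReal) := fun j hj =>
      (EReal.coe_toReal (ht j hj) (hb j hj)).symm
    -- finiteness of conjugates on J
    have hct : ∀ j ∈ J, econj (f j) (xs j) ≠ ⊤ :=
      ereal_sum_ne_top' (fun j _ => hconj_ne_bot j (xs j)) (by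
        rw [hS]; exact EReal.coe_ne_top _)
    set t : ι → ℝ := fun j => (econj (f j) (xs j)).toReal with htdef
    have htj : ∀ j ∈ J, econj (f j) (xs j) = ((t j : ℝ) : EReal) := fun j hj =>
      (EReal.coe_toReal (hct j hj) (hconj_ne_bot j (xs j))).symm
    have hsum_t : ∑ j ∈ J, t j = p x - fx := by
      have h : ((∑ j ∈ J, t j : ℝ) : EReal) = ((p x - fx : ℝ) : EReal) := by
        rw [ereal_coe_sum', ← hS]
        exact Finset.sum_congr rfl fun j hj => (htj j hj).symm
      exact EReal.coe_eq_coe_iff.mp h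
    have hge : ∀ j ∈ J, xs j x - a j ≤ t j := by
      intro j hj
      have h1 := hconj_ge j (xs j) x
      rw [haj j hj, htj j hj, ← EReal.coe_sub, EReal.coe_le_coe_iff] at h1
      exact h1
    have hsa : ∑ j ∈ J, a j ≤ fx := by
      have h : ((∑ j ∈ J, a j : ℝ) : EReal) ≤ (fx : EReal) := by
        rw [ereal_coe_sum']
        calc ∑ j ∈ J, ((a j : ℝ) : EReal) = ∑ j ∈ J, f j x :=
              Finset.sum_congr rfl fun j hj => (haj j hj).symm
          _ ≤ (fx : EReal) := hsum_le
      exact EReal.coe_le_coe_iff.mp h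
    have heq : ∑ j ∈ J, xs j x = p x := by rw [← heval J xs x, hxsum]
    have hnn : ∀ j ∈ J, 0 ≤ t j - (xs j x - a j) := fun j hj => sub_nonneg.mpr (hge j hj)
    have hsum0 : ∑ j ∈ J, (t j - (xs j x - a j)) ≤ 0 := by
      rw [Finset.sum_sub_distrib, hsum_t, Finset.sum_sub_distrib, heq]
      linarith
    have hzero : ∀ j ∈ J, t j - (xs j x - a j) = 0 :=
      (Finset.sum_eq_zero_iff_of_nonneg hnn).mp
        (le_antisymm hsum0 (Finset.sum_nonneg hnn))
    have hsa_eq : ∑ j ∈ J, a j = fx := by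
      have h : ∑ j ∈ J, (t j - (xs j x - a j)) = 0 := Finset.sum_eq_zero hzero
      rw [Finset.sum_sub_distrib, hsum_t, Finset.sum_sub_distrib, heq] at h
      linarith
    have hJS : J ∈ Ssets f x := by
      refine ⟨hJne, hFt, ?_⟩
      calc ∑ j ∈ J, f j x = ∑ j ∈ J, ((a j : ℝ) : EReal) :=
            Finset.sum_congr rfl haj
        _ = ((∑ j ∈ J, a j : ℝ) : EReal) := (ereal_coe_sum' J a).symm
        _ = (fx : EReal) := by rw [hsa_eq]
        _ = rsum f x := hFx.symm
    have hsub : ∀ j ∈ J, xs j ∈ esubdiff (f j) x := by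
      intro j hj
      refine ⟨by rw [haj j hj]; exact EReal.coe_ne_bot _,
        by rw [haj j hj]; exact EReal.coe_ne_top _, fun y => ?_⟩
      by_cases hy : f j y = ⊤
      · rw [hy]; exact le_top
      have hby : f j y = ((f j y).toReal : EReal) :=
        (EReal.coe_toReal hy ((hproper j).1 y)).symm
      have h1 := hconj_ge j (xs j) y
      rw [hby, htj j hj, ← EReal.coe_sub, EReal.coe_le_coe_iff] at h1
      have h2 : t j = xs j x - a j := by have := hzero j hj; linarith
      rw [haj j hj, hby, ← EReal.coe_add, EReal.coe_le_coe_iff]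
      linarith
    exact ⟨J, hJS, (Set.mem_finset_sum J (fun j => esubdiff (f j) x) p).mpr ⟨xs, fun {j} hj => hsub j hj, hxsum⟩⟩
  · rintro ⟨J, hJS, hpmem⟩
    obtain ⟨hJne, hFt, hJsum⟩ := hJS
    obtain ⟨xs, hxs, hxsum⟩ := (Set.mem_finset_sum J (fun j => esubdiff (f j) x) p).mp hpmem
    have haj : ∀ j ∈ J, f j x = (((f j x).toReal : ℝ) : EReal) := fun j hj =>
      (EReal.coe_toReal (hxs hj).2.1 (hxs hj).1).symm
    have hFx : rsum f x = ((∑ j ∈ J, (f j x).toReal : ℝ) : EReal) := by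
      rw [← hJsum, ereal_coe_sum']
      exact Finset.sum_congr rfl haj
    refine ⟨by rw [hFx]; exact EReal.coe_ne_bot _, hFt, fun y => ?_⟩
    have hc : ∑ j ∈ J, (xs j y - xs j x) = p y - p x := by
      rw [Finset.sum_sub_distrib, ← heval J xs y, ← heval J xs x, hxsum]
    have h1 : ∑ j ∈ J, (((f j x).toReal + (xs j y - xs j x) : ℝ) : EReal)
        ≤ ∑ j ∈ J, f j y := by
      refine Finset.sum_le_sum fun j hj => ?_
      calc (((f j x).toReal + (xs j y - xs j x) : ℝ) : EReal)
          = f j x + (((xs j y - xs j x : ℝ)) : EReal) := by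
            rw [EReal.coe_add, ← haj j hj]
        _ ≤ f j y := (hxs hj).2.2 y
    have h2 : rsum f x + ((p y - p x : ℝ) : EReal)
        = ∑ j ∈ J, (((f j x).toReal + (xs j y - xs j x) : ℝ) : EReal) := by
      rw [hFx, ← EReal.coe_add, ← ereal_coe_sum', EReal.coe_eq_coe_iff,
        Finset.sum_add_distrib, hc]
    rw [h2]
    exact h1.trans (hle_rsum J hJne y)
end
end
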